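/- arXiv:1303.5832 — 8 statements merged into one kernel-verified Lean document; each statement's English description precedes it below -/
import Mathlib

section
/- (Necessity part of the main theorem.) Let n ≥ 2, let G^i be a spray on Ω × (ℝⁿ∖{0}), and let F be a Finsler function with d_hF = 0 (S is the geodesic spray of F). Assume F has non-vanishing scalar flag curvature: there is a smooth nowhere-zero function κ with R^i_j = κ (F² δ^i_j − F (∂F/∂y^j) y^i) for all i,j. Then: (1) the spray is isotropic with ρ = κF² (so ρ is nowhere zero) and α_j = κ F ∂F/∂y^j; (2) setting σ_j = α_j/ρ one has σ_j = (1/F) ∂F/∂y^j = ∂(ln F)/∂y^j, hence ∂σ_j/∂y^i = ∂σ_i/∂y^j for all i,j (the condition d_J(α/ρ)=0); (3) the horizontal Berwald derivative of σ vanishes: ∂σ_j/∂x^i − Σ_l N^l_i ∂σ_j/∂y^l − Σ_k σ_k ∂N^k_i/∂y^j = 0 for all i,j. -/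
open Real Finset

/-- Partial derivative with respect to the base coordinate `x^i`. -/
noncomputable def pdx {n : ℕ} (f : ((Fin n → ℝ) × (Fin n → ℝ)) → ℝ) (i : Fin n)
    (p : (Fin n → ℝ) × (Fin n → ℝ)) : ℝ :=
  fderiv ℝ f p (Pi.single i 1, 0)

/-- Partial derivative with respect to the fibre coordinate `y^i`. -/
noncomputable def pdy {n : ℕ} (f : ((Fin n → ℝ) × (Fin n → ℝ)) → ℝ) (i : Fin n)
    (p : (Fin n → ℝ) × (Fin n → ℝ)) : ℝ :=
  fderiv ℝ f p (0, Pi.single i 1)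

/-- Partial derivative of a function on the base with respect to `x^i`. -/
noncomputable def pdb {n : ℕ} (f : (Fin n → ℝ) → ℝ) (i : Fin n) (x : Fin n → ℝ) : ℝ :=
  fderiv ℝ f x (Pi.single i 1)

/-- Partial derivative with respect to the full coordinates `(x, y)` of `ℝ²ⁿ`,
indexed by `Fin n ⊕ Fin n` (`inl` = base directions, `inr` = fibre directions). -/
noncomputable def pdz {n : ℕ} (f : ((Fin n → ℝ) × (Fin n → ℝ)) → ℝ) (a : Fin n ⊕ Fin n)
    (p : (Fin n → ℝ) × (Fin n → ℝ)) : ℝ :=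
  match a with
  | Sum.inl i => pdx f i p
  | Sum.inr i => pdy f i p

/-- The spray vector field `S = yᵏ ∂/∂xᵏ - 2Gᵏ ∂/∂yᵏ` applied to a function. -/
noncomputable def sprayOp {n : ℕ} (G : Fin n → ((Fin n → ℝ) × (Fin n → ℝ)) → ℝ)
    (f : ((Fin n → ℝ) × (Fin n → ℝ)) → ℝ) (p : (Fin n → ℝ) × (Fin n → ℝ)) : ℝ :=
  ∑ k, (p.2 k * pdx f k p - 2 * G k p * pdy f k p)

/-- The flat spray `S₀ = yᵏ ∂/∂xᵏ` applied to a function. -/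
noncomputable def flatOp {n : ℕ} (f : ((Fin n → ℝ) × (Fin n → ℝ)) → ℝ)
    (p : (Fin n → ℝ) × (Fin n → ℝ)) : ℝ :=
  ∑ k, p.2 k * pdx f k p

/-- The coefficients `N^i_j = ∂G^i/∂y^j` of the nonlinear connection. -/
noncomputable def Ncon {n : ℕ} (G : Fin n → ((Fin n → ℝ) × (Fin n → ℝ)) → ℝ)
    (i j : Fin n) : ((Fin n → ℝ) × (Fin n → ℝ)) → ℝ :=
  fun p => pdy (G i) j p

/-- The components `R^i_j = 2 ∂G^i/∂x^j - S(N^i_j) - N^i_k N^k_j` of the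
Jacobi endomorphism. -/
noncomputable def jacobiR {n : ℕ} (G : Fin n → ((Fin n → ℝ) × (Fin n → ℝ)) → ℝ)
    (i j : Fin n) (p : (Fin n → ℝ) × (Fin n → ℝ)) : ℝ :=
  2 * pdx (G i) j p - sprayOp G (Ncon G i j) p - ∑ k, Ncon G i k p * Ncon G k j p

/-- The domain `Ω × (ℝⁿ ∖ {0})`. -/
def sprayDom {n : ℕ} (Ω : Set (Fin n → ℝ)) : Set ((Fin n → ℝ) × (Fin n → ℝ)) :=
  Ω ×ˢ {y | y ≠ 0}

/-- Squared Euclidean norm `|v|²` on `ℝⁿ`. -/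
def nsq {n : ℕ} (v : Fin n → ℝ) : ℝ := ∑ i, v i ^ 2

/-- Euclidean inner product `⟨v, w⟩` on `ℝⁿ`. -/
def dotp {n : ℕ} (v w : Fin n → ℝ) : ℝ := ∑ i, v i * w i

section MyHelpers

open Filter Finset

variable {EE : Type*} [NormedAddCommGroup EE] [NormedSpace ℝ EE]

lemma my_contDiffOn_fderiv {f : EE → ℝ} {s : Set EE} (hf : ContDiffOn ℝ (⊤ : ℕ∞) f s) (hs : IsOpen s)
    (v : EE) : ContDiffOn ℝ (⊤ : ℕ∞) (fun q => fderiv ℝ f q v) s :=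
  (ContinuousLinearMap.apply ℝ ℝ v).contDiff.comp_contDiffOn
    (hf.fderiv_of_isOpen hs (by simp))

lemma my_diffAt {f : EE → ℝ} {s : Set EE} (hf : ContDiffOn ℝ (⊤ : ℕ∞) f s) (hs : IsOpen s) {p : EE}
    (hp : p ∈ s) : DifferentiableAt ℝ f p :=
  (hf.contDiffAt (hs.mem_nhds hp)).differentiableAt (by simp)

lemma my_fderiv_fderiv {f : EE → ℝ} {p : EE} (hd : DifferentiableAt ℝ (fderiv ℝ f) p) (v w : EE) :
    fderiv ℝ (fun q => fderiv ℝ f q w) p v = fderiv ℝ (fderiv ℝ f) p v w := by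
  have h := (ContinuousLinearMap.apply ℝ ℝ w).hasFDerivAt.comp p hd.hasFDerivAt
  rw [show (fun q => fderiv ℝ f q w) = (ContinuousLinearMap.apply ℝ ℝ w) ∘ (fderiv ℝ f) from rfl,
    h.fderiv]
  rfl

lemma my_schwarz {f : EE → ℝ} {s : Set EE} (hf : ContDiffOn ℝ (⊤ : ℕ∞) f s) (hs : IsOpen s) {p : EE}
    (hp : p ∈ s) (v w : EE) :
    fderiv ℝ (fun q => fderiv ℝ f q w) p v = fderiv ℝ (fun q => fderiv ℝ f q v) p w := by
  have hat : ContDiffAt ℝ (⊤ : ℕ∞) f p := hf.contDiffAt (hs.mem_nhds hp)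
  have hd : DifferentiableAt ℝ (fderiv ℝ f) p :=
    (hat.fderiv_right (m := 1) (WithTop.coe_le_coe.mpr le_top)).differentiableAt one_ne_zero
  rw [my_fderiv_fderiv hd v w, my_fderiv_fderiv hd w v]
  exact hat.isSymmSndFDerivAt (by rw [minSmoothness_of_isRCLikeNormedField]; exact WithTop.coe_le_coe.mpr le_top) v w

lemma my_fderiv_div_apply {u v : EE → ℝ} {p : EE} (hu : DifferentiableAt ℝ u p)
    (hv : DifferentiableAt ℝ v p) (h0 : v p ≠ 0) (w : EE) :
    fderiv ℝ (fun q => u q / v q) p w =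
      (fderiv ℝ u p w * v p - u p * fderiv ℝ v p w) / v p ^ 2 := by
  have hinv : HasFDerivAt (fun q => (v q)⁻¹) ((-((v p)^2)⁻¹) • fderiv ℝ v p) p :=
    (hasDerivAt_inv h0).comp_hasFDerivAt p hv.hasFDerivAt
  have h := hu.hasFDerivAt.fun_mul hinv
  rw [show (fun q => u q / v q) = fun q => u q * (v q)⁻¹ by funext q; rw [div_eq_mul_inv], h.fderiv]
  simp only [ContinuousLinearMap.add_apply, ContinuousLinearMap.smul_apply, smul_eq_mul]
  field_simp
  ring

lemma my_fderiv_log_apply {v : EE → ℝ} {p : EE} (hv : DifferentiableAt ℝ v p) (h0 : v p ≠ 0)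
    (w : EE) : fderiv ℝ (fun q => Real.log (v q)) p w = fderiv ℝ v p w / v p := by
  have h := (Real.hasDerivAt_log h0).comp_hasFDerivAt p hv.hasFDerivAt
  rw [show (fun q => Real.log (v q)) = Real.log ∘ v from rfl, h.fderiv]
  simp only [ContinuousLinearMap.smul_apply, smul_eq_mul]
  rw [div_eq_inv_mul]

lemma my_fderiv_expand {ι : Type*} [Fintype ι] {A B : ι → EE → ℝ} {C : EE → ℝ} {p : EE}
    (hA : ∀ k, DifferentiableAt ℝ (A k) p) (hB : ∀ k, DifferentiableAt ℝ (B k) p)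
    (hC : DifferentiableAt ℝ C p) (w : EE) :
    fderiv ℝ (fun q => C q - ∑ k, A k q * B k q) p w =
      fderiv ℝ C p w - ∑ k, (fderiv ℝ (A k) p w * B k p + A k p * fderiv ℝ (B k) p w) := by
  have h := hC.hasFDerivAt.fun_sub
    (HasFDerivAt.fun_sum (u := Finset.univ) (fun k _ => (hA k).hasFDerivAt.fun_mul (hB k).hasFDerivAt))
  rw [h.fderiv]
  rw [ContinuousLinearMap.sub_apply, ContinuousLinearMap.sum_apply]
  congr 1
  refine Finset.sum_congr rfl fun k _ => ?_
  simp only [ContinuousLinearMap.add_apply, ContinuousLinearMap.smul_apply, smul_eq_mul]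
  ring

end MyHelpers

section MyAux

open Filter Finset

lemma my_fderiv_fiber {n : ℕ} {f : ((Fin n → ℝ) × (Fin n → ℝ)) → ℝ}
    {p : (Fin n → ℝ) × (Fin n → ℝ)} (v : Fin n → ℝ) :
    fderiv ℝ f p (0, v) = ∑ k, v k * pdy f k p := by
  have hv : ((0, v) : (Fin n → ℝ) × (Fin n → ℝ)) =
      ∑ k, v k • ((0, Pi.single k 1) : (Fin n → ℝ) × (Fin n → ℝ)) := by
    apply Prod.ext
    · simp [Prod.fst_sum]
    · simp only [Prod.snd_sum, Prod.smul_snd]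
      funext j
      simp [Pi.single_apply, Finset.sum_apply, mul_ite]
  rw [hv, map_sum]
  refine Finset.sum_congr rfl fun k _ => ?_
  rw [show ((v k • ((0, Pi.single k 1) : (Fin n → ℝ) × (Fin n → ℝ)))) =
      v k • (((0 : Fin n → ℝ), Pi.single k 1) : (Fin n → ℝ) × (Fin n → ℝ)) from rfl, map_smul]
  rfl

lemma my_euler {n : ℕ} {f : ((Fin n → ℝ) × (Fin n → ℝ)) → ℝ}
    {p : (Fin n → ℝ) × (Fin n → ℝ)} (hf : DifferentiableAt ℝ f p)
    (hhom : ∀ l : ℝ, 0 < l → f (p.1, l • p.2) = l * f p) :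
    ∑ k, p.2 k * pdy f k p = f p := by
  have h3 : (fun l : ℝ => ((p.1, l • p.2) : (Fin n → ℝ) × (Fin n → ℝ))) =
      fun l => ((p.1, 0) : (Fin n → ℝ) × (Fin n → ℝ)) +
        l • ((0, p.2) : (Fin n → ℝ) × (Fin n → ℝ)) := by
    funext l
    apply Prod.ext <;> simp
  have hc : HasDerivAt (fun l : ℝ => ((p.1, l • p.2) : (Fin n → ℝ) × (Fin n → ℝ)))
      ((0, p.2) : (Fin n → ℝ) × (Fin n → ℝ)) 1 := by
    rw [h3]
    simpa using ((hasDerivAt_id (1:ℝ)).smul_const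
      (((0, p.2)) : (Fin n → ℝ) × (Fin n → ℝ))).const_add ((p.1, 0) : (Fin n → ℝ) × (Fin n → ℝ))
  have hF' : HasFDerivAt f (fderiv ℝ f p)
      ((fun l : ℝ => ((p.1, l • p.2) : (Fin n → ℝ) × (Fin n → ℝ))) 1) := by
    simpa using hf.hasFDerivAt
  have hF1 : HasDerivAt (fun l : ℝ => f (p.1, l • p.2)) (fderiv ℝ f p (0, p.2)) 1 :=
    hF'.comp_hasDerivAt 1 hc
  have hF2 : HasDerivAt (fun l : ℝ => f (p.1, l • p.2)) (f p) 1 := by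
    have heq : (fun l : ℝ => l * f p) =ᶠ[nhds (1:ℝ)] fun l : ℝ => f (p.1, l • p.2) := by
      filter_upwards [eventually_gt_nhds zero_lt_one] with l hl
      exact (hhom l hl).symm
    have := (hasDerivAt_id (1:ℝ)).mul_const (f p)
    simpa using this.congr_of_eventuallyEq heq.symm
  rw [← my_fderiv_fiber p.2]
  exact hF1.unique hF2

end MyAux

/-- Necessity part of the main theorem. If the spray is the
geodesic spray of a Finsler function `F` of non-vanishing scalar flag curvature
`κ`, then: (1) it is isotropic with `ρ = κF²` (nowhere zero) and
`α_j = κF ∂F/∂y^j`; (2) `σ_j = α_j/ρ = ∂(ln F)/∂y^j` and `d_J(α/ρ) = 0`;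
(3) the horizontal Berwald derivative of `σ` vanishes. -/
theorem scalar_flag_necessity
    (n : ℕ) (hn : 2 ≤ n) (Ω : Set (Fin n → ℝ)) (hΩ : IsOpen Ω)
    (G : Fin n → ((Fin n → ℝ) × (Fin n → ℝ)) → ℝ)
    (hGsmooth : ∀ i, ContDiffOn ℝ (⊤ : ℕ∞) (G i) (sprayDom Ω))
    (hGhom : ∀ i, ∀ x ∈ Ω, ∀ y : Fin n → ℝ, y ≠ 0 → ∀ l : ℝ, 0 < l →
      G i (x, l • y) = l ^ 2 * G i (x, y))
    (F : ((Fin n → ℝ) × (Fin n → ℝ)) → ℝ)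
    (hFsmooth : ContDiffOn ℝ (⊤ : ℕ∞) F (sprayDom Ω))
    (hFpos : ∀ p ∈ sprayDom Ω, 0 < F p)
    (hFhom : ∀ p ∈ sprayDom Ω, ∀ l : ℝ, 0 < l → F (p.1, l • p.2) = l * F p)
    (hFreg : ∀ p ∈ sprayDom Ω,
      (Matrix.of fun i j => (1 / 2) * pdy (pdy (fun q => F q ^ 2) j) i p).det ≠ 0)
    (hgeo : ∀ i, ∀ p ∈ sprayDom Ω, pdx F i p - ∑ j, Ncon G j i p * pdy F j p = 0)
    (κ : ((Fin n → ℝ) × (Fin n → ℝ)) → ℝ)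
    (hκsmooth : ContDiffOn ℝ (⊤ : ℕ∞) κ (sprayDom Ω))
    (hκ0 : ∀ p ∈ sprayDom Ω, κ p ≠ 0)
    (hΦ : ∀ i j, ∀ p ∈ sprayDom Ω, jacobiR G i j p =
      κ p * (F p ^ 2 * (if i = j then 1 else 0) - F p * pdy F j p * p.2 i))
    (σ : Fin n → ((Fin n → ℝ) × (Fin n → ℝ)) → ℝ)
    (hσ : ∀ j p, σ j p = (κ p * F p * pdy F j p) / (κ p * F p ^ 2)) :
    (∀ i j, ∀ p ∈ sprayDom Ω, jacobiR G i j p =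
        (κ p * F p ^ 2) * (if i = j then 1 else 0) - (κ p * F p * pdy F j p) * p.2 i) ∧
    (∀ p ∈ sprayDom Ω, ((n : ℝ) - 1) * (κ p * F p ^ 2) = ∑ i, jacobiR G i i p) ∧
    (∀ p ∈ sprayDom Ω, κ p * F p ^ 2 ≠ 0) ∧
    (∀ j, ∀ p ∈ sprayDom Ω, σ j p = pdy F j p / F p ∧
        σ j p = pdy (fun q => Real.log (F q)) j p) ∧
    (∀ i j, ∀ p ∈ sprayDom Ω, pdy (σ j) i p = pdy (σ i) j p) ∧
    (∀ i j, ∀ p ∈ sprayDom Ω,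
      pdx (σ j) i p - (∑ l, Ncon G l i p * pdy (σ j) l p)
        - (∑ k, σ k p * pdy (Ncon G k i) j p) = 0) := by
  classical
  have hs : IsOpen (sprayDom Ω) := hΩ.prod isOpen_ne
  have hFd : ∀ {p}, p ∈ sprayDom Ω → DifferentiableAt ℝ F p :=
    fun {p} hp => my_diffAt hFsmooth hs hp
  have hFyC : ∀ j : Fin n, ContDiffOn ℝ (⊤ : ℕ∞) (pdy F j) (sprayDom Ω) :=
    fun j => my_contDiffOn_fderiv hFsmooth hs (0, Pi.single j 1)
  have hFyd : ∀ (j : Fin n) {p}, p ∈ sprayDom Ω → DifferentiableAt ℝ (pdy F j) p :=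
    fun j {p} hp => my_diffAt (hFyC j) hs hp
  have hNd : ∀ (k i : Fin n) {p}, p ∈ sprayDom Ω → DifferentiableAt ℝ (Ncon G k i) p :=
    fun k i {p} hp => my_diffAt (my_contDiffOn_fderiv (hGsmooth k) hs (0, Pi.single i 1)) hs hp
  have heuler : ∀ p ∈ sprayDom Ω, ∑ k, p.2 k * pdy F k p = F p :=
    fun p hp => my_euler (hFd hp) (fun l hl => hFhom p hp l hl)
  have hσval : ∀ (k : Fin n), ∀ p ∈ sprayDom Ω, σ k p = pdy F k p / F p := by
    intro k p hp
    rw [hσ]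
    have h1 := hκ0 p hp
    have h2 := (hFpos p hp).ne'
    field_simp
  have hσev : ∀ (k : Fin n) {p}, p ∈ sprayDom Ω →
      σ k =ᶠ[nhds p] fun q => pdy F k q / F q := by
    intro k p hp
    filter_upwards [hs.mem_nhds hp] with q hq
    exact hσval k q hq
  refine ⟨?_, ?_, ?_, ?_, ?_, ?_⟩
  · -- part 1
    intro i j p hp
    rw [hΦ i j p hp]
    ring
  · -- part 2
    intro p hp
    have h := heuler p hp
    rw [show (∑ i, jacobiR G i i p)
        = ∑ i : Fin n, κ p * (F p ^ 2 * (if i = i then (1:ℝ) else 0)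
            - F p * pdy F i p * p.2 i) from
      Finset.sum_congr rfl fun i _ => hΦ i i p hp]
    simp only [eq_self_iff_true, if_true, mul_one]
    rw [show (∑ i : Fin n, κ p * (F p ^ 2 - F p * pdy F i p * p.2 i))
        = ∑ i : Fin n, (κ p * F p ^ 2 - (κ p * F p) * (p.2 i * pdy F i p)) from
      Finset.sum_congr rfl fun i _ => by ring]
    rw [Finset.sum_sub_distrib, Finset.sum_const, ← Finset.mul_sum, h]
    simp only [Finset.card_univ, Fintype.card_fin, nsmul_eq_mul]
    ring
  · -- part 3
    intro p hp
    exact mul_ne_zero (hκ0 p hp) (pow_ne_zero 2 (hFpos p hp).ne')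
  · -- part 4
    intro j p hp
    refine ⟨hσval j p hp, ?_⟩
    rw [hσval j p hp,
      show pdy (fun q => Real.log (F q)) j p
        = fderiv ℝ (fun q => Real.log (F q)) p (0, Pi.single j 1) from rfl,
      my_fderiv_log_apply (hFd hp) (hFpos p hp).ne']
    rfl
  · -- part 5
    intro i j p hp
    have ha := (hFpos p hp).ne'
    have key : ∀ a b : Fin n, pdy (σ a) b p
        = (pdy (pdy F a) b p * F p - pdy F a p * pdy F b p) / F p ^ 2 := by
      intro a b
      show fderiv ℝ (σ a) p (0, Pi.single b 1) = _
      rw [Filter.EventuallyEq.fderiv_eq (hσev a hp),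
        my_fderiv_div_apply (hFyd a hp) (hFd hp) ha]
      rfl
    have hsw : pdy (pdy F j) i p = pdy (pdy F i) j p :=
      my_schwarz hFsmooth hs hp (0, Pi.single i 1) (0, Pi.single j 1)
    rw [key j i, key i j, hsw]
    ring
  · -- part 6
    intro i j p hp
    have ha := (hFpos p hp).ne'
    have hpx : pdx (σ j) i p
        = (pdx (pdy F j) i p * F p - pdy F j p * pdx F i p) / F p ^ 2 := by
      show fderiv ℝ (σ j) p (Pi.single i 1, 0) = _
      rw [Filter.EventuallyEq.fderiv_eq (hσev j hp),
        my_fderiv_div_apply (hFyd j hp) (hFd hp) ha]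
      rfl
    have hpy : ∀ l : Fin n, pdy (σ j) l p
        = (pdy (pdy F j) l p * F p - pdy F j p * pdy F l p) / F p ^ 2 := by
      intro l
      show fderiv ℝ (σ j) p (0, Pi.single l 1) = _
      rw [Filter.EventuallyEq.fderiv_eq (hσev j hp),
        my_fderiv_div_apply (hFyd j hp) (hFd hp) ha]
      rfl
    have hsw1 : pdx (pdy F j) i p = pdy (pdx F i) j p :=
      my_schwarz hFsmooth hs hp (Pi.single i 1, 0) (0, Pi.single j 1)
    have hsw2 : ∀ l : Fin n, pdy (pdy F j) l p = pdy (pdy F l) j p :=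
      fun l => my_schwarz hFsmooth hs hp (0, Pi.single l 1) (0, Pi.single j 1)
    have hgeod : pdy (pdx F i) j p
        - ∑ k, (pdy (Ncon G k i) j p * pdy F k p + Ncon G k i p * pdy (pdy F k) j p) = 0 := by
      have hz : (fun q => pdx F i q - ∑ k, Ncon G k i q * pdy F k q) =ᶠ[nhds p]
          (fun _ => (0:ℝ)) := by
        filter_upwards [hs.mem_nhds hp] with q hq
        exact hgeo i q hq
      have h0 : fderiv ℝ (fun q => pdx F i q - ∑ k, Ncon G k i q * pdy F k q) p = 0 := by
        rw [hz.fderiv_eq]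
        exact fderiv_const_apply 0
      have hpxd : DifferentiableAt ℝ (pdx F i) p :=
        my_diffAt (my_contDiffOn_fderiv hFsmooth hs (Pi.single i 1, 0)) hs hp
      have hexp := my_fderiv_expand (A := fun k => Ncon G k i) (B := fun k => pdy F k)
        (C := pdx F i) (fun k => hNd k i hp) (fun k => hFyd k hp) hpxd
        ((0, Pi.single j 1))
      rw [h0] at hexp
      simp only [ContinuousLinearMap.zero_apply] at hexp
      exact hexp.symm
    have hgeod' : pdy (pdx F i) j p
        = (∑ k, pdy F k p * pdy (Ncon G k i) j p)
          + ∑ k, Ncon G k i p * pdy (pdy F k) j p := by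
      rw [Finset.sum_add_distrib] at hgeod
      rw [show (∑ k, pdy (Ncon G k i) j p * pdy F k p)
          = ∑ k, pdy F k p * pdy (Ncon G k i) j p from
        Finset.sum_congr rfl fun k _ => mul_comm _ _] at hgeod
      linarith
    have e1 : ∑ l, Ncon G l i p * pdy (σ j) l p
        = (∑ l, Ncon G l i p * pdy (pdy F l) j p) / F p
          - pdy F j p * (∑ l, Ncon G l i p * pdy F l p) / F p ^ 2 := by
      rw [show (∑ l, Ncon G l i p * pdy (σ j) l p)
          = ∑ l, (Ncon G l i p * pdy (pdy F l) j p / F p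
              - pdy F j p * (Ncon G l i p * pdy F l p) / F p ^ 2) from
        Finset.sum_congr rfl fun l _ => by rw [hpy l, hsw2 l]; field_simp]
      rw [Finset.sum_sub_distrib, ← Finset.sum_div, ← Finset.sum_div, ← Finset.mul_sum,
        mul_div_assoc]
    have e2 : ∑ k, σ k p * pdy (Ncon G k i) j p
        = (∑ k, pdy F k p * pdy (Ncon G k i) j p) / F p := by
      rw [show (∑ k, σ k p * pdy (Ncon G k i) j p)
          = ∑ k, (pdy F k p * pdy (Ncon G k i) j p) / F p from
        Finset.sum_congr rfl fun k _ => by rw [hσval k p hp]; ring,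
        ← Finset.sum_div]
    have hb : pdx F i p = ∑ k, Ncon G k i p * pdy F k p := by
      have := hgeo i p hp
      linarith
    rw [hpx, e1, e2, hsw1, hgeod', hb]
    field_simp
    ring
end

section
/- Let G^i be a spray on Ω × (ℝⁿ∖{0}) and F a smooth positive function, positively 1-homogeneous in y, with d_hF = 0. Define the 1-forms β = Σ_j (1/F)(∂F/∂y^j) dx^j and θ = Σ_j (∂F²/∂y^j) dx^j on Ω × (ℝⁿ∖{0}) ⊆ ℝ²ⁿ. Then as 2-forms, dβ + (2/F) dF ∧ β = (1/(2F²)) dθ; moreover, at any point this 2-form is nondegenerate (as a bilinear form on ℝ²ⁿ) if and only if the vertical Hessian matrix (½ ∂²F²/∂y^i∂y^j) is invertible at that point. -/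
open Real Finset

lemma core_identity {n : ℕ} {s : Set ((Fin n → ℝ) × (Fin n → ℝ))} (hs : IsOpen s)
    {F : ((Fin n → ℝ) × (Fin n → ℝ)) → ℝ} (hF : ContDiffOn ℝ (⊤ : ℕ∞) F s)
    (hFpos : ∀ q ∈ s, 0 < F q) (j : Fin n)
    (v : (Fin n → ℝ) × (Fin n → ℝ)) {p : (Fin n → ℝ) × (Fin n → ℝ)} (hp : p ∈ s) :
    fderiv ℝ (fun q => pdy F j q / F q) p v
      + (2 / F p) * (fderiv ℝ F p v * (pdy F j p / F p))
    = (1 / (2 * F p ^ 2)) * fderiv ℝ (pdy (fun q => F q ^ 2) j) p v := by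
  have hmem : s ∈ nhds p := hs.mem_nhds hp
  have hFd : ∀ q ∈ s, DifferentiableAt ℝ F q := fun q hq =>
    (hF.differentiableOn (by simp)).differentiableAt (hs.mem_nhds hq)
  have hFne : F p ≠ 0 := ne_of_gt (hFpos p hp)
  have hucd : ContDiffOn ℝ 1 (fun q => fderiv ℝ F q) s := hF.fderiv_of_isOpen hs (by exact WithTop.coe_le_coe.mpr le_top)
  have hud : DifferentiableAt ℝ (pdy F j) p := by
    have h1 : DifferentiableOn ℝ (fun q => fderiv ℝ F q (0, Pi.single j 1)) s :=
      (hucd.clm_apply contDiffOn_const).differentiableOn (by simp)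
    exact h1.differentiableAt hmem
  have hsq : ∀ q ∈ s, pdy (fun q => F q ^ 2) j q = 2 * F q * pdy F j q := by
    intro q hq
    have h2 : fderiv ℝ (fun q => F q ^ 2) q = F q • fderiv ℝ F q + F q • fderiv ℝ F q := by
      have heq : (fun q => F q ^ 2) = fun q => F q * F q := by funext q; ring
      rw [heq, fderiv_fun_mul (hFd q hq) (hFd q hq)]
    simp only [pdy, h2, ContinuousLinearMap.add_apply, ContinuousLinearMap.coe_smul',
      Pi.smul_apply, smul_eq_mul]
    ring
  have hθf : fderiv ℝ (pdy (fun q => F q ^ 2) j) p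
      = fderiv ℝ (fun q => 2 * F q * pdy F j q) p := by
    apply Filter.EventuallyEq.fderiv_eq
    filter_upwards [hmem] with q hq using hsq q hq
  have hFd2 : DifferentiableAt ℝ (fun q => 2 * F q) p := (hFd p hp).const_mul 2
  have hprod : fderiv ℝ (fun q => 2 * F q * pdy F j q) p v
      = (2 * F p) * fderiv ℝ (pdy F j) p v + pdy F j p * (2 * fderiv ℝ F p v) := by
    rw [fderiv_fun_mul hFd2 hud, fderiv_const_mul (hFd p hp) 2]
    simp only [ContinuousLinearMap.add_apply, ContinuousLinearMap.coe_smul', Pi.smul_apply,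
      smul_eq_mul]
    try ring
  have hinv : HasFDerivAt (fun q => (F q)⁻¹) ((-(F p ^ 2)⁻¹) • fderiv ℝ F p) p :=
    (hasDerivAt_inv hFne).comp_hasFDerivAt p (hFd p hp).hasFDerivAt
  have hdiv : fderiv ℝ (fun q => pdy F j q / F q) p v
      = fderiv ℝ (pdy F j) p v * (F p)⁻¹ + pdy F j p * (-(F p ^ 2)⁻¹ * fderiv ℝ F p v) := by
    have h2 : (fun q => pdy F j q / F q) = fun q => pdy F j q * (F q)⁻¹ := by
      funext q; rw [div_eq_mul_inv]
    rw [h2, (hud.hasFDerivAt.fun_mul hinv).fderiv]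
    simp only [ContinuousLinearMap.add_apply, ContinuousLinearMap.coe_smul', Pi.smul_apply,
      smul_eq_mul]
    ring
  rw [hθf, hprod, hdiv]
  field_simp
  ring

lemma det_blocks_ne {n : ℕ} (A B C : Matrix (Fin n) (Fin n) ℝ) :
    (Matrix.fromBlocks A B C 0).det ≠ 0 ↔ B.det ≠ 0 ∧ C.det ≠ 0 := by
  set J : Matrix (Fin n ⊕ Fin n) (Fin n ⊕ Fin n) ℝ := Matrix.fromBlocks 0 1 1 0 with hJ
  have hsplit : Matrix.fromBlocks A B C (0 : Matrix (Fin n) (Fin n) ℝ)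
      = J * Matrix.fromBlocks C 0 A B := by
    rw [hJ, Matrix.fromBlocks_multiply]; simp
  have hJJ : J * J = 1 := by
    rw [hJ, Matrix.fromBlocks_multiply]; simp [Matrix.fromBlocks_one]
  have hdJ : J.det ≠ 0 := by
    intro h
    have := congrArg Matrix.det hJJ
    rw [Matrix.det_mul, h, Matrix.det_one] at this
    simp at this
  rw [hsplit, Matrix.det_mul, Matrix.det_fromBlocks_zero₁₂]
  constructor
  · intro h
    constructor
    · intro hb; exact h (by simp [hb])
    · intro hc; exact h (by simp [hc])
  · rintro ⟨hb, hc⟩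
    exact mul_ne_zero hdJ (mul_ne_zero hc hb)

/-- For a spray and a positive `1`-homogeneous `F` with `d_hF = 0`,
the `2`-forms satisfy `dβ + (2/F) dF ∧ β = (1/(2F²)) dθ` componentwise, where
`β = Σ (1/F)(∂F/∂y^j) dx^j` and `θ = Σ (∂F²/∂y^j) dx^j`; moreover this `2`-form
is nondegenerate at a point iff the vertical Hessian `(½ ∂²F²/∂y^i∂y^j)` is
invertible there. -/
theorem regularity_two_form
    (n : ℕ) (Ω : Set (Fin n → ℝ)) (hΩ : IsOpen Ω)
    (G : Fin n → ((Fin n → ℝ) × (Fin n → ℝ)) → ℝ)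
    (hGsmooth : ∀ i, ContDiffOn ℝ (⊤ : ℕ∞) (G i) (sprayDom Ω))
    (hGhom : ∀ i, ∀ x ∈ Ω, ∀ y : Fin n → ℝ, y ≠ 0 → ∀ l : ℝ, 0 < l →
      G i (x, l • y) = l ^ 2 * G i (x, y))
    (F : ((Fin n → ℝ) × (Fin n → ℝ)) → ℝ)
    (hFsmooth : ContDiffOn ℝ (⊤ : ℕ∞) F (sprayDom Ω))
    (hFpos : ∀ p ∈ sprayDom Ω, 0 < F p)
    (hFhom : ∀ p ∈ sprayDom Ω, ∀ l : ℝ, 0 < l → F (p.1, l • p.2) = l * F p)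
    (hgeo : ∀ i, ∀ p ∈ sprayDom Ω, pdx F i p - ∑ j, Ncon G j i p * pdy F j p = 0)
    (β θ : (Fin n ⊕ Fin n) → ((Fin n → ℝ) × (Fin n → ℝ)) → ℝ)
    (hβ : ∀ j p, β (Sum.inl j) p = pdy F j p / F p)
    (hβ' : ∀ j p, β (Sum.inr j) p = 0)
    (hθ : ∀ j p, θ (Sum.inl j) p = pdy (fun q => F q ^ 2) j p)
    (hθ' : ∀ j p, θ (Sum.inr j) p = 0) :
    ∀ p ∈ sprayDom Ω,
      (∀ a b, pdz (β b) a p - pdz (β a) b p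
          + (2 / F p) * (pdz F a p * β b p - pdz F b p * β a p)
        = (1 / (2 * F p ^ 2)) * (pdz (θ b) a p - pdz (θ a) b p)) ∧
      ((Matrix.of fun a b => pdz (β b) a p - pdz (β a) b p
          + (2 / F p) * (pdz F a p * β b p - pdz F b p * β a p)).det ≠ 0 ↔
        (Matrix.of fun i j => (1 / 2) * pdy (pdy (fun q => F q ^ 2) j) i p).det ≠ 0) := by
  
  intro p hp
  have hsOpen : IsOpen (sprayDom Ω) := by
    unfold sprayDom; exact hΩ.prod isOpen_ne
  have hFne : F p ≠ 0 := ne_of_gt (hFpos p hp)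
  let dv : Fin n ⊕ Fin n → (Fin n → ℝ) × (Fin n → ℝ) :=
    Sum.elim (fun i => (Pi.single i 1, 0)) (fun i => (0, Pi.single i 1))
  have hpdz : ∀ (f : ((Fin n → ℝ) × (Fin n → ℝ)) → ℝ) (a : Fin n ⊕ Fin n) q,
      pdz f a q = fderiv ℝ f q (dv a) := by
    intro f a q; cases a <;> rfl
  have hz : ∀ (a : Fin n ⊕ Fin n) q, pdz (fun _ => (0:ℝ)) a q = 0 := by
    intro a q; rw [hpdz]; simp
  have hzx : ∀ (i : Fin n) (q : (Fin n → ℝ) × (Fin n → ℝ)),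
      pdx (fun _ => (0:ℝ)) i q = 0 := by
    intro i q; simp [pdx]
  have hzy : ∀ (i : Fin n) (q : (Fin n → ℝ) × (Fin n → ℝ)),
      pdy (fun _ => (0:ℝ)) i q = 0 := by
    intro i q; simp [pdy]
  have βinr : ∀ j, β (Sum.inr j) = fun _ => (0:ℝ) := fun j => funext (hβ' j)
  have θinr : ∀ j, θ (Sum.inr j) = fun _ => (0:ℝ) := fun j => funext (hθ' j)
  have βinl : ∀ j, β (Sum.inl j) = fun q => pdy F j q / F q := fun j => funext (hβ j)
  have θinl : ∀ j, θ (Sum.inl j) = pdy (fun q => F q ^ 2) j := fun j => funext (hθ j)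
  have core : ∀ (b a : Fin n ⊕ Fin n),
      pdz (β b) a p + (2 / F p) * (pdz F a p * β b p)
      = (1 / (2 * F p ^ 2)) * pdz (θ b) a p := by
    intro b a
    cases b with
    | inl j =>
      rw [hpdz (β (Sum.inl j)), hpdz F, hpdz (θ (Sum.inl j)), βinl, θinl]
      exact core_identity hsOpen hFsmooth hFpos j (dv a) hp
    | inr j =>
      rw [βinr, θinr]
      simp only [hz]
      simp
  have hpart1 : ∀ a b, pdz (β b) a p - pdz (β a) b p
      + (2 / F p) * (pdz F a p * β b p - pdz F b p * β a p)
      = (1 / (2 * F p ^ 2)) * (pdz (θ b) a p - pdz (θ a) b p) := by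
    intro a b
    linear_combination (core b a) - (core a b)
  refine ⟨hpart1, ?_⟩
  set c : ℝ := 1 / (2 * F p ^ 2) with hc
  have hcpos : 0 < 2 * F p ^ 2 := by
    have := hFpos p hp; positivity
  have hcne : c ≠ 0 := one_div_ne_zero (ne_of_gt hcpos)
  have h2c : (2 * c) ≠ 0 := mul_ne_zero two_ne_zero hcne
  set H : Matrix (Fin n) (Fin n) ℝ :=
    Matrix.of fun i j => (1 / 2) * pdy (pdy (fun q => F q ^ 2) j) i p with hH
  set A : Matrix (Fin n) (Fin n) ℝ :=
    Matrix.of fun i j => c * (pdz (θ (Sum.inl j)) (Sum.inl i) p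
      - pdz (θ (Sum.inl i)) (Sum.inl j) p) with hA
  have hM : (Matrix.of fun a b => pdz (β b) a p - pdz (β a) b p
        + (2 / F p) * (pdz F a p * β b p - pdz F b p * β a p))
      = Matrix.fromBlocks A ((-(2 * c)) • H.transpose) ((2 * c) • H) 0 := by
    ext a b
    rw [Matrix.of_apply, hpart1 a b]
    cases a with
    | inl i =>
      cases b with
      | inl j =>
        rw [Matrix.fromBlocks_apply₁₁, hA, Matrix.of_apply]
      | inr j =>
        rw [Matrix.fromBlocks_apply₁₂, Matrix.smul_apply, Matrix.transpose_apply,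
          θinr, θinl, hH]
        simp only [hz, pdz, hzx, hzy, Matrix.of_apply, smul_eq_mul]
        ring
    | inr i =>
      cases b with
      | inl j =>
        rw [Matrix.fromBlocks_apply₂₁, Matrix.smul_apply, θinl, θinr, hH]
        simp only [hz, pdz, hzx, hzy, Matrix.of_apply, smul_eq_mul]
        ring
      | inr j =>
        rw [Matrix.fromBlocks_apply₂₂]
        simp only [θinr, hz]
        simp
  rw [hM, det_blocks_ne]
  have hdetT : ((-(2 * c)) • H.transpose).det = (-(2 * c)) ^ n * H.det := by
    rw [Matrix.det_smul, Matrix.det_transpose, Fintype.card_fin]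
  have hdetH : ((2 * c) • H).det = (2 * c) ^ n * H.det := by
    rw [Matrix.det_smul, Fintype.card_fin]
  rw [hdetT, hdetH]
  constructor
  · rintro ⟨hb, -⟩
    exact right_ne_zero_of_mul hb
  · intro h
    exact ⟨mul_ne_zero (pow_ne_zero _ (neg_ne_zero.2 h2c)) h,
      mul_ne_zero (pow_ne_zero _ h2c) h⟩
end

section
/- Every projective deformation of the flat spray is isotropic, with Ricci scalar ρ = P² − S₀(P) and α_j = P ∂P/∂y^j + ∂(S₀P)/∂y^j − 3 ∂P/∂x^j. Precisely: if P is smooth and positively 1-homogeneous in y on Ω × (ℝⁿ∖{0}) and G^i = P y^i, then the Jacobi endomorphism satisfies R^i_j = (P² − S₀P) δ^i_j − (P ∂P/∂y^j + ∂(S₀P)/∂y^j − 3 ∂P/∂x^j) y^i for all i,j, where S₀P = Σ_k y^k ∂P/∂x^k. -/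
open Real Finset Topology Filter

/-- Every projective deformation `G^i = P y^i` of the flat spray is
isotropic, with `ρ = P² - S₀P` and
`α_j = P ∂P/∂y^j + ∂(S₀P)/∂y^j - 3 ∂P/∂x^j`. -/
theorem projective_deformation_isotropic
    (n : ℕ) (Ω : Set (Fin n → ℝ)) (hΩ : IsOpen Ω)
    (P : ((Fin n → ℝ) × (Fin n → ℝ)) → ℝ)
    (hPsmooth : ContDiffOn ℝ (⊤ : ℕ∞) P (sprayDom Ω))
    (hPhom : ∀ x ∈ Ω, ∀ y : Fin n → ℝ, y ≠ 0 → ∀ l : ℝ, 0 < l →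
      P (x, l • y) = l * P (x, y))
    (G : Fin n → ((Fin n → ℝ) × (Fin n → ℝ)) → ℝ)
    (hGdef : ∀ i p, G i p = P p * p.2 i)
    (i j : Fin n) (p : (Fin n → ℝ) × (Fin n → ℝ)) (hp : p ∈ sprayDom Ω) :
    jacobiR G i j p =
      (P p ^ 2 - flatOp P p) * (if i = j then 1 else 0)
        - (P p * pdy P j p + pdy (flatOp P) j p - 3 * pdx P j p) * p.2 i := by
  classical
  have hU : IsOpen (sprayDom Ω) := hΩ.prod isOpen_ne
  have hnhds : sprayDom Ω ∈ 𝓝 p := hU.mem_nhds hp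
  have hPdiff : ∀ q ∈ sprayDom Ω, DifferentiableAt ℝ P q := fun q hq =>
    (hPsmooth.contDiffAt (hU.mem_nhds hq)).differentiableAt (by simp)
  have hDsm : ContDiffOn ℝ (⊤ : ℕ∞) (fderiv ℝ P) (sprayDom Ω) :=
    hPsmooth.fderiv_of_isOpen hU (by simp)
  have hDdiff : DifferentiableAt ℝ (fderiv ℝ P) p :=
    (hDsm.contDiffAt hnhds).differentiableAt (by simp)
  have hsymm : ∀ v w, fderiv ℝ (fderiv ℝ P) p v w = fderiv ℝ (fderiv ℝ P) p w v :=
    (hPsmooth.contDiffAt hnhds).isSymmSndFDerivAt (by rw [minSmoothness_of_isRCLikeNormedField]; exact WithTop.coe_le_coe.mpr (le_top : (2 : ℕ∞) ≤ ⊤))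
  -- Euler identity on the domain
  have heuler : ∀ q ∈ sprayDom Ω, fderiv ℝ P q ((0 : Fin n → ℝ), q.2) = P q := by
    intro q hq
    have hg : HasDerivAt (fun l : ℝ => ((q.1 : Fin n → ℝ), l • q.2))
        (((0 : Fin n → ℝ)), q.2) 1 := by
      have h2 : HasDerivAt (fun l : ℝ => l • q.2) q.2 1 := by
        simpa using (hasDerivAt_id (1 : ℝ)).smul_const q.2
      exact (hasDerivAt_const (1 : ℝ) q.1).prodMk h2
    have hPf : HasFDerivAt P (fderiv ℝ P q) ((fun l : ℝ => ((q.1 : Fin n → ℝ), l • q.2)) 1) := by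
      rw [show (fun l : ℝ => ((q.1 : Fin n → ℝ), l • q.2)) 1 = q by simp]
      exact (hPdiff q hq).hasFDerivAt
    have h2 : HasDerivAt (fun l : ℝ => P (q.1, l • q.2)) (fderiv ℝ P q ((0 : Fin n → ℝ), q.2)) 1 :=
      hPf.comp_hasDerivAt 1 hg
    have h3 : HasDerivAt (fun l : ℝ => P (q.1, l • q.2)) (P q) 1 := by
      have hev : (fun l : ℝ => P (q.1, l • q.2)) =ᶠ[𝓝 (1 : ℝ)] fun l => l * P q := by
        filter_upwards [Ioi_mem_nhds (zero_lt_one)] with l hl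
        exact hPhom q.1 hq.1 q.2 hq.2 l hl
      have h4 : HasDerivAt (fun l : ℝ => l * P q) (P q) 1 := by
        simpa using (hasDerivAt_id (1 : ℝ)).mul_const (P q)
      exact h4.congr_of_eventuallyEq hev
    exact h2.unique h3
  -- differentiated Euler identity
  have hEul' : ∀ v : (Fin n → ℝ) × (Fin n → ℝ),
      fderiv ℝ P p ((0 : Fin n → ℝ), v.2)
        + fderiv ℝ (fderiv ℝ P) p v ((0 : Fin n → ℝ), p.2) = fderiv ℝ P p v := by
    set u : ((Fin n → ℝ) × (Fin n → ℝ)) →L[ℝ] ((Fin n → ℝ) × (Fin n → ℝ)) :=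
      (0 : ((Fin n → ℝ) × (Fin n → ℝ)) →L[ℝ] (Fin n → ℝ)).prod
        (ContinuousLinearMap.snd ℝ (Fin n → ℝ) (Fin n → ℝ)) with hu
    have hfe : (fun q => fderiv ℝ P q (u q)) =ᶠ[𝓝 p] P := by
      filter_upwards [hnhds] with q hq
      exact heuler q hq
    have h1 : fderiv ℝ (fun q => fderiv ℝ P q (u q)) p = fderiv ℝ P p := hfe.fderiv_eq
    have h2 : fderiv ℝ (fun q => fderiv ℝ P q (u q)) p
        = (fderiv ℝ P p).comp u + (fderiv ℝ (fderiv ℝ P) p).flip (u p) := by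
      rw [fderiv_clm_apply hDdiff u.differentiableAt, u.fderiv]
    intro v
    have h3 := congrArg (fun L : ((Fin n → ℝ) × (Fin n → ℝ)) →L[ℝ] ℝ => L v) (h2.symm.trans h1)
    simpa [hu] using h3
  have hHy : ∀ v : (Fin n → ℝ) × (Fin n → ℝ),
      fderiv ℝ (fderiv ℝ P) p v ((0 : Fin n → ℝ), p.2)
        = fderiv ℝ P p v - fderiv ℝ P p ((0 : Fin n → ℝ), v.2) := by
    intro v
    have := hEul' v
    linarith
  -- decomposition of (0, y) into basis vectors
  have hdecomp : ∀ L : ((Fin n → ℝ) × (Fin n → ℝ)) →L[ℝ] ℝ,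
      L ((0 : Fin n → ℝ), p.2)
        = ∑ k, p.2 k * L ((0 : Fin n → ℝ), Pi.single k 1) := by
    intro L
    have hy : (((0 : Fin n → ℝ), p.2) : (Fin n → ℝ) × (Fin n → ℝ))
        = ∑ k, p.2 k • ((((0 : Fin n → ℝ), (Pi.single k 1 : Fin n → ℝ))) :
            (Fin n → ℝ) × (Fin n → ℝ)) := by
      refine Prod.ext ?_ ?_
      · simp [Prod.fst_sum]
      · rw [Prod.snd_sum]
        have hk : ∀ k : Fin n, (p.2 k • ((((0 : Fin n → ℝ), (Pi.single k 1 : Fin n → ℝ))) :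
            (Fin n → ℝ) × (Fin n → ℝ))).2 = (Pi.single k (p.2 k) : Fin n → ℝ) := by
          intro k
          funext m
          simp [Pi.single_apply, mul_ite]
        rw [Finset.sum_congr rfl fun k _ => hk k]
        exact (Finset.univ_sum_single p.2).symm
    rw [hy, map_sum]
    refine Finset.sum_congr rfl fun k _ => ?_
    rw [map_smul, smul_eq_mul]
  have ES1 : ∑ k, p.2 k * fderiv ℝ P p ((0 : Fin n → ℝ), Pi.single k 1) = P p := by
    rw [← hdecomp (fderiv ℝ P p)]
    exact heuler p hp
  have ES2 : ∑ k, p.2 k * fderiv ℝ (fderiv ℝ P) p ((0 : Fin n → ℝ), Pi.single j 1)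
      ((0 : Fin n → ℝ), Pi.single k 1) = 0 := by
    rw [← hdecomp (fderiv ℝ (fderiv ℝ P) p ((0 : Fin n → ℝ), Pi.single j 1)), hHy]
    simp
  -- the coordinate linear functionals
  set cm : Fin n → (((Fin n → ℝ) × (Fin n → ℝ)) →L[ℝ] ℝ) := fun m =>
    (ContinuousLinearMap.proj m).comp (ContinuousLinearMap.snd ℝ (Fin n → ℝ) (Fin n → ℝ))
    with hcm
  have hcmap : ∀ m (v : (Fin n → ℝ) × (Fin n → ℝ)), cm m v = v.2 m := fun m v => rfl
  -- derivative of G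
  have hGhas : ∀ m : Fin n, ∀ q ∈ sprayDom Ω,
      HasFDerivAt (G m) (P q • cm m + q.2 m • fderiv ℝ P q) q := by
    intro m q hq
    have hGfun : G m = fun q : (Fin n → ℝ) × (Fin n → ℝ) => P q * q.2 m :=
      funext (hGdef m)
    rw [hGfun]
    exact (hPdiff q hq).hasFDerivAt.mul ((cm m).hasFDerivAt)
  have hNval : ∀ a b : Fin n, ∀ q ∈ sprayDom Ω,
      Ncon G a b q = P q * (Pi.single b 1 : Fin n → ℝ) a
        + q.2 a * fderiv ℝ P q ((0 : Fin n → ℝ), Pi.single b 1) := by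
    intro a b q hq
    show fderiv ℝ (G a) q ((0 : Fin n → ℝ), Pi.single b 1) = _
    rw [(hGhas a q hq).fderiv]
    simp [hcmap, smul_eq_mul]
  have hNev : ∀ a b : Fin n, Ncon G a b =ᶠ[𝓝 p]
      fun q => P q * (Pi.single b 1 : Fin n → ℝ) a
        + q.2 a * fderiv ℝ P q ((0 : Fin n → ℝ), Pi.single b 1) := by
    intro a b
    filter_upwards [hnhds] with q hq
    exact hNval a b q hq
  -- derivative of the clm-application
  have hClm : ∀ w : (Fin n → ℝ) × (Fin n → ℝ),
      HasFDerivAt (fun q => fderiv ℝ P q w) ((fderiv ℝ (fderiv ℝ P) p).flip w) p := by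
    intro w
    have := hDdiff.hasFDerivAt.clm_apply (hasFDerivAt_const w p)
    simpa using this
  have hNder : ∀ a b : Fin n,
      HasFDerivAt (fun q : (Fin n → ℝ) × (Fin n → ℝ) => P q * (Pi.single b 1 : Fin n → ℝ) a
          + q.2 a * fderiv ℝ P q ((0 : Fin n → ℝ), Pi.single b 1))
        (((Pi.single b 1 : Fin n → ℝ) a) • fderiv ℝ P p
          + (p.2 a • ((fderiv ℝ (fderiv ℝ P) p).flip ((0 : Fin n → ℝ), Pi.single b 1))
            + (fderiv ℝ P p ((0 : Fin n → ℝ), Pi.single b 1)) • cm a)) p := by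
    intro a b
    have h1 := (hPdiff p hp).hasFDerivAt.mul_const ((Pi.single b 1 : Fin n → ℝ) a)
    have h3 := ((cm a).hasFDerivAt).mul (hClm ((0 : Fin n → ℝ), Pi.single b 1))
    exact h1.add h3
  have hNx : ∀ a b k : Fin n, pdx (Ncon G a b) k p
      = (Pi.single b 1 : Fin n → ℝ) a * fderiv ℝ P p (Pi.single k 1, 0)
        + p.2 a * fderiv ℝ (fderiv ℝ P) p (Pi.single k 1, 0) ((0 : Fin n → ℝ), Pi.single b 1) := by
    intro a b k
    show fderiv ℝ (Ncon G a b) p (Pi.single k 1, 0) = _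
    rw [(hNev a b).fderiv_eq, (hNder a b).fderiv]
    simp [hcmap, smul_eq_mul]
  have hNy : ∀ a b k : Fin n, pdy (Ncon G a b) k p
      = (Pi.single b 1 : Fin n → ℝ) a * fderiv ℝ P p ((0 : Fin n → ℝ), Pi.single k 1)
        + p.2 a * fderiv ℝ (fderiv ℝ P) p ((0 : Fin n → ℝ), Pi.single k 1)
            ((0 : Fin n → ℝ), Pi.single b 1)
        + fderiv ℝ P p ((0 : Fin n → ℝ), Pi.single b 1) * (Pi.single k 1 : Fin n → ℝ) a := by
    intro a b k
    show fderiv ℝ (Ncon G a b) p ((0 : Fin n → ℝ), Pi.single k 1) = _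
    rw [(hNev a b).fderiv_eq, (hNder a b).fderiv]
    simp [hcmap, smul_eq_mul]
    ring
  -- derivative of flatOp P
  have hQder : HasFDerivAt (flatOp P)
      (∑ k, ((cm k) p • ((fderiv ℝ (fderiv ℝ P) p).flip ((Pi.single k 1 : Fin n → ℝ), 0))
        + (fderiv ℝ P p ((Pi.single k 1 : Fin n → ℝ), 0)) • cm k)) p := by
    have : flatOp P = fun q : (Fin n → ℝ) × (Fin n → ℝ) =>
        ∑ k, q.2 k * fderiv ℝ P q ((Pi.single k 1 : Fin n → ℝ), 0) := rfl
    rw [this]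
    refine HasFDerivAt.fun_sum ?_
    intro k _
    exact ((cm k).hasFDerivAt (x := p)).mul (hClm ((Pi.single k 1 : Fin n → ℝ), 0))
  have hsum_single : ∀ c : Fin n → ℝ, (∑ k, c k * (Pi.single k 1 : Fin n → ℝ) i) = c i := by
    intro c
    simp [Pi.single_apply]
  have hQ : pdy (flatOp P) j p
      = fderiv ℝ P p ((Pi.single j 1 : Fin n → ℝ), 0)
        + ∑ k, p.2 k * fderiv ℝ (fderiv ℝ P) p ((0 : Fin n → ℝ), Pi.single j 1)
            ((Pi.single k 1 : Fin n → ℝ), 0) := by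
    show fderiv ℝ (flatOp P) p ((0 : Fin n → ℝ), Pi.single j 1) = _
    rw [hQder.fderiv, ContinuousLinearMap.sum_apply]
    have hterm : ∀ k : Fin n,
        ((cm k) p • ((fderiv ℝ (fderiv ℝ P) p).flip ((Pi.single k 1 : Fin n → ℝ), 0))
          + (fderiv ℝ P p ((Pi.single k 1 : Fin n → ℝ), 0)) • cm k)
            ((0 : Fin n → ℝ), Pi.single j 1)
        = fderiv ℝ P p ((Pi.single k 1 : Fin n → ℝ), 0) * (Pi.single j 1 : Fin n → ℝ) k
          + p.2 k * (fderiv ℝ (fderiv ℝ P) p ((0 : Fin n → ℝ), Pi.single j 1)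
              ((Pi.single k 1 : Fin n → ℝ), 0)) := by
      intro k
      simp [hcmap, smul_eq_mul]
      ring
    rw [Finset.sum_congr rfl fun k _ => hterm k, Finset.sum_add_distrib]
    congr 1
    simp [Pi.single_apply]
  -- the three building blocks
  have B1 : pdx (G i) j p = p.2 i * fderiv ℝ P p ((Pi.single j 1 : Fin n → ℝ), 0) := by
    show fderiv ℝ (G i) p ((Pi.single j 1 : Fin n → ℝ), 0) = _
    rw [(hGhas i p hp).fderiv]
    simp [hcmap, smul_eq_mul]
  have hQval : flatOp P p = ∑ k, p.2 k * fderiv ℝ P p ((Pi.single k 1 : Fin n → ℝ), 0) := rfl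
  have B3 : ∑ k, Ncon G i k p * Ncon G k j p
      = P p ^ 2 * (if i = j then 1 else 0)
        + 3 * P p * p.2 i * fderiv ℝ P p ((0 : Fin n → ℝ), Pi.single j 1) := by
    have hterm : ∀ k : Fin n, Ncon G i k p * Ncon G k j p
        = P p ^ 2 * ((Pi.single k 1 : Fin n → ℝ) i * (Pi.single j 1 : Fin n → ℝ) k)
          + (P p * fderiv ℝ P p ((0 : Fin n → ℝ), Pi.single j 1)) * (p.2 k * (Pi.single k 1 : Fin n → ℝ) i)
          + (P p * p.2 i) * ((Pi.single j 1 : Fin n → ℝ) k * fderiv ℝ P p ((0 : Fin n → ℝ), Pi.single k 1))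
          + (p.2 i * fderiv ℝ P p ((0 : Fin n → ℝ), Pi.single j 1))
              * (p.2 k * fderiv ℝ P p ((0 : Fin n → ℝ), Pi.single k 1)) := by
      intro k
      rw [hNval i k p hp, hNval k j p hp]
      ring
    rw [Finset.sum_congr rfl fun k _ => hterm k]
    rw [Finset.sum_add_distrib, Finset.sum_add_distrib, Finset.sum_add_distrib]
    rw [← Finset.mul_sum, ← Finset.mul_sum, ← Finset.mul_sum, ← Finset.mul_sum]
    have e1 : (∑ k, (Pi.single k 1 : Fin n → ℝ) i * (Pi.single j 1 : Fin n → ℝ) k)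
        = (if i = j then 1 else 0) := by
      simp [Pi.single_apply]
    have e2 : (∑ k, p.2 k * (Pi.single k 1 : Fin n → ℝ) i) = p.2 i := hsum_single p.2
    have e3 : (∑ k, (Pi.single j 1 : Fin n → ℝ) k * fderiv ℝ P p ((0 : Fin n → ℝ), Pi.single k 1))
        = fderiv ℝ P p ((0 : Fin n → ℝ), Pi.single j 1) := by
      simp [Pi.single_apply]
    rw [e1, e2, e3, ES1]
    ring
  have B2 : sprayOp G (Ncon G i j) p
      = (if i = j then 1 else 0) * flatOp P p
        + p.2 i * (∑ k, p.2 k * fderiv ℝ (fderiv ℝ P) p ((0 : Fin n → ℝ), Pi.single j 1)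
            ((Pi.single k 1 : Fin n → ℝ), 0))
        - 2 * P p ^ 2 * (if i = j then 1 else 0)
        - 2 * P p * fderiv ℝ P p ((0 : Fin n → ℝ), Pi.single j 1) * p.2 i := by
    have hterm : ∀ k : Fin n,
        p.2 k * pdx (Ncon G i j) k p - 2 * G k p * pdy (Ncon G i j) k p
        = (Pi.single j 1 : Fin n → ℝ) i * (p.2 k * fderiv ℝ P p ((Pi.single k 1 : Fin n → ℝ), 0))
          + p.2 i * (p.2 k * fderiv ℝ (fderiv ℝ P) p ((0 : Fin n → ℝ), Pi.single j 1)
              ((Pi.single k 1 : Fin n → ℝ), 0))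
          - (2 * P p * (Pi.single j 1 : Fin n → ℝ) i)
              * (p.2 k * fderiv ℝ P p ((0 : Fin n → ℝ), Pi.single k 1))
          - (2 * P p * p.2 i)
              * (p.2 k * fderiv ℝ (fderiv ℝ P) p ((0 : Fin n → ℝ), Pi.single j 1)
                  ((0 : Fin n → ℝ), Pi.single k 1))
          - (2 * P p * fderiv ℝ P p ((0 : Fin n → ℝ), Pi.single j 1))
              * (p.2 k * (Pi.single k 1 : Fin n → ℝ) i) := by
      intro k
      rw [hNx i j k, hNy i j k, hGdef k p,
        hsymm ((Pi.single k 1 : Fin n → ℝ), 0) ((0 : Fin n → ℝ), Pi.single j 1),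
        hsymm ((0 : Fin n → ℝ), Pi.single k 1) ((0 : Fin n → ℝ), Pi.single j 1)]
      ring
    have hso : sprayOp G (Ncon G i j) p
        = ∑ k, (p.2 k * pdx (Ncon G i j) k p - 2 * G k p * pdy (Ncon G i j) k p) := rfl
    rw [hso, Finset.sum_congr rfl fun k _ => hterm k]
    rw [Finset.sum_sub_distrib, Finset.sum_sub_distrib, Finset.sum_sub_distrib,
      Finset.sum_add_distrib]
    rw [← Finset.mul_sum, ← Finset.mul_sum, ← Finset.mul_sum, ← Finset.mul_sum, ← Finset.mul_sum]
    rw [ES1, ES2, hsum_single p.2, ← hQval]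
    have hsingle_ij : (Pi.single j 1 : Fin n → ℝ) i = (if i = j then 1 else 0) := by
      simp [Pi.single_apply]
    rw [hsingle_ij]
    ring
  -- final assembly
  have hpdyP : pdy P j p = fderiv ℝ P p ((0 : Fin n → ℝ), Pi.single j 1) := rfl
  have hpdxP : pdx P j p = fderiv ℝ P p ((Pi.single j 1 : Fin n → ℝ), 0) := rfl
  have hjac : jacobiR G i j p = 2 * pdx (G i) j p - sprayOp G (Ncon G i j) p
      - ∑ k, Ncon G i k p * Ncon G k j p := rfl
  rw [hjac, B1, B2, B3, hQ, hpdyP, hpdxP]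
  ring
end

section
/- Let g be a smooth function on Ω × (ℝⁿ∖{0}), let P be smooth, positively 1-homogeneous in y, with ∂P/∂y^i = ∂g/∂x^i for all i (so P = S₀g), and consider the spray G^i = P y^i with N^j_i = ∂G^j/∂y^i and Ricci scalar ρ = P² − S₀P. Then the condition d_hρ = 0, i.e. ∂ρ/∂x^i − Σ_j N^j_i ∂ρ/∂y^j = 0 for all i, holds if and only if ∂(e^{−2g}ρ)/∂x^i + ½ S₀(e^{−2g}) ∂ρ/∂y^i = 0 for all i, where S₀(e^{−2g}) = Σ_k y^k ∂(e^{−2g})/∂x^k. -/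
open Real Finset

section Aux

lemma snd_decomp {n : ℕ} (v : Fin n → ℝ) :
    ((0, v) : (Fin n → ℝ) × (Fin n → ℝ)) =
      ∑ j, v j • (((0 : Fin n → ℝ), (Pi.single j 1 : Fin n → ℝ)) :
        (Fin n → ℝ) × (Fin n → ℝ)) := by
  ext k
  · rw [Prod.fst_sum]; simp
  · simp only [Prod.snd_sum, Prod.smul_mk, Finset.sum_apply, Pi.smul_apply,
      Pi.single_apply, smul_eq_mul, mul_ite, mul_one, mul_zero]
    rw [Finset.sum_ite_eq Finset.univ k v]
    simp

lemma fderiv_dir_snd {n : ℕ} (f : ((Fin n → ℝ) × (Fin n → ℝ)) → ℝ)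
    (p : (Fin n → ℝ) × (Fin n → ℝ)) (v : Fin n → ℝ) :
    fderiv ℝ f p (0, v) = ∑ j, v j * pdy f j p := by
  rw [snd_decomp v, map_sum]
  refine Finset.sum_congr rfl fun j _ => ?_
  rw [map_smul]
  simp [pdy]

lemma euler_hom {n : ℕ} (f : ((Fin n → ℝ) × (Fin n → ℝ)) → ℝ)
    (p : (Fin n → ℝ) × (Fin n → ℝ)) (m : ℕ) (hf : DifferentiableAt ℝ f p)
    (hhom : ∀ t : ℝ, 0 < t → f (p.1, t • p.2) = t ^ m * f p) :
    ∑ j, p.2 j * pdy f j p = m * f p := by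
  have hc : HasDerivAt (fun t : ℝ => ((p.1, t • p.2) : (Fin n → ℝ) × (Fin n → ℝ)))
      ((0 : Fin n → ℝ), p.2) 1 := by
    have h2 : HasDerivAt (fun t : ℝ => t • p.2) ((1:ℝ) • p.2) 1 :=
      (hasDerivAt_id (1:ℝ)).smul_const p.2
    simpa using (hasDerivAt_const (1:ℝ) p.1).prodMk h2
  have h1 : HasDerivAt (fun t : ℝ => f (p.1, t • p.2)) (fderiv ℝ f p (0, p.2)) 1 := by
    have hf' : HasFDerivAt f (fderiv ℝ f p) ((p.1, (1:ℝ) • p.2)) := by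
      rw [one_smul]; exact hf.hasFDerivAt
    exact hf'.comp_hasDerivAt 1 hc
  have h2 : HasDerivAt (fun t : ℝ => t ^ m * f p) ((m : ℝ) * f p) 1 := by
    simpa using (hasDerivAt_pow m (1:ℝ)).mul_const (f p)
  have heq : (fun t : ℝ => t ^ m * f p) =ᶠ[nhds (1:ℝ)] fun t => f (p.1, t • p.2) := by
    filter_upwards [eventually_gt_nhds (by norm_num : (0:ℝ) < 1)] with t ht
    exact (hhom t ht).symm
  have h2' : HasDerivAt (fun t : ℝ => f (p.1, t • p.2)) ((m : ℝ) * f p) 1 :=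
    h2.congr_of_eventuallyEq heq.symm
  rw [← fderiv_dir_snd, h1.unique h2']

end Aux

/-- For the spray `G^i = P y^i` with `P = S₀g` (i.e.
`∂P/∂y^i = ∂g/∂x^i`), the condition `d_hρ = 0` holds iff
`∂(e^{-2g}ρ)/∂x^i + ½ S₀(e^{-2g}) ∂ρ/∂y^i = 0` for all `i`. -/
theorem dh_rho_exp_condition
    (n : ℕ) (Ω : Set (Fin n → ℝ)) (hΩ : IsOpen Ω)
    (g : ((Fin n → ℝ) × (Fin n → ℝ)) → ℝ)
    (hgsmooth : ContDiffOn ℝ (⊤ : ℕ∞) g (sprayDom Ω))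
    (P : ((Fin n → ℝ) × (Fin n → ℝ)) → ℝ)
    (hPsmooth : ContDiffOn ℝ (⊤ : ℕ∞) P (sprayDom Ω))
    (hPhom : ∀ x ∈ Ω, ∀ y : Fin n → ℝ, y ≠ 0 → ∀ l : ℝ, 0 < l →
      P (x, l • y) = l * P (x, y))
    (hPg : ∀ i, ∀ p ∈ sprayDom Ω, pdy P i p = pdx g i p)
    (G : Fin n → ((Fin n → ℝ) × (Fin n → ℝ)) → ℝ)
    (hGdef : ∀ i p, G i p = P p * p.2 i)
    (ρ : ((Fin n → ℝ) × (Fin n → ℝ)) → ℝ)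
    (hρdef : ∀ p, ρ p = P p ^ 2 - flatOp P p) :
    (∀ i, ∀ p ∈ sprayDom Ω,
        pdx ρ i p - ∑ j, Ncon G j i p * pdy ρ j p = 0) ↔
    (∀ i, ∀ p ∈ sprayDom Ω,
        pdx (fun q => Real.exp (-2 * g q) * ρ q) i p
          + (1 / 2) * flatOp (fun q => Real.exp (-2 * g q)) p * pdy ρ i p = 0) := by
  have hD : IsOpen (sprayDom Ω) := hΩ.prod isOpen_ne
  have hPdAt : ∀ q ∈ sprayDom Ω, DifferentiableAt ℝ P q := fun q hq =>
    (hPsmooth.differentiableOn (by simp)).differentiableAt (hD.mem_nhds hq)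
  have hgdAt : ∀ q ∈ sprayDom Ω, DifferentiableAt ℝ g q := fun q hq =>
    (hgsmooth.differentiableOn (by simp)).differentiableAt (hD.mem_nhds hq)
  have hfd : ContDiffOn ℝ (⊤ : ℕ∞) (fun q => fderiv ℝ P q) (sprayDom Ω) :=
    hPsmooth.fderiv_of_isOpen hD (by simp)
  have hpdxPd : ∀ (k : Fin n), ∀ q ∈ sprayDom Ω, DifferentiableAt ℝ (fun z => pdx P k z) q := by
    intro k q hq
    have : DifferentiableOn ℝ (fun z => (fderiv ℝ P z) ((Pi.single k 1 : Fin n → ℝ), 0))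
        (sprayDom Ω) :=
      (hfd.differentiableOn (by simp)).clm_apply (differentiableOn_const _)
    exact (this.differentiableAt (hD.mem_nhds hq))
  -- homogeneity of pdx P
  have hpdxhom : ∀ (k : Fin n), ∀ p ∈ sprayDom Ω, ∀ t : ℝ, 0 < t →
      pdx P k (p.1, t • p.2) = t * pdx P k p := by
    intro k p hp t ht
    set A : ((Fin n → ℝ) × (Fin n → ℝ)) →L[ℝ] ((Fin n → ℝ) × (Fin n → ℝ)) :=
      (ContinuousLinearMap.fst ℝ _ _).prod (t • ContinuousLinearMap.snd ℝ _ _) with hA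
    have hq : ((p.1, t • p.2) : (Fin n → ℝ) × (Fin n → ℝ)) ∈ sprayDom Ω :=
      ⟨hp.1, smul_ne_zero ht.ne' hp.2⟩
    have h1 : HasFDerivAt (fun z : (Fin n → ℝ) × (Fin n → ℝ) => P (z.1, t • z.2))
        ((fderiv ℝ P (p.1, t • p.2)).comp A) p := by
      have := (hPdAt _ hq).hasFDerivAt.comp p A.hasFDerivAt
      exact this
    have h2 : HasFDerivAt (fun z => t * P z) (t • fderiv ℝ P p) p :=
      (hPdAt p hp).hasFDerivAt.const_mul t
    have heqv : (fun z : (Fin n → ℝ) × (Fin n → ℝ) => P (z.1, t • z.2)) =ᶠ[nhds p]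
        (fun z => t * P z) := by
      filter_upwards [hD.mem_nhds hp] with z hz
      exact hPhom z.1 hz.1 z.2 hz.2 t ht
    have hEq := (h1.congr_of_eventuallyEq heqv.symm).unique h2
    have := congrArg (fun L : ((Fin n → ℝ) × (Fin n → ℝ)) →L[ℝ] ℝ =>
      L ((Pi.single k 1 : Fin n → ℝ), 0)) hEq
    simpa [pdx, hA, A, smul_zero] using this
  have hEulP : ∀ p ∈ sprayDom Ω, ∑ k, p.2 k * pdy P k p = P p := by
    intro p hp
    have := euler_hom P p 1 (hPdAt p hp)
      (fun t ht => by simpa using hPhom p.1 hp.1 p.2 hp.2 t ht)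
    simpa using this
  have hρfun : ρ = fun q => P q ^ 2 - ∑ k, q.2 k * pdx P k q := funext fun q => hρdef q
  have hρdAt : ∀ q ∈ sprayDom Ω, DifferentiableAt ℝ ρ q := by
    intro q hq
    rw [hρfun]
    refine ((hPdAt q hq).pow 2).sub (DifferentiableAt.fun_sum fun k _ => ?_)
    exact (((ContinuousLinearMap.proj k).comp
      (ContinuousLinearMap.snd ℝ (Fin n → ℝ) (Fin n → ℝ))).differentiableAt).mul
      (hpdxPd k q hq)
  have hρhom : ∀ p ∈ sprayDom Ω, ∀ t : ℝ, 0 < t →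
      ρ (p.1, t • p.2) = t ^ 2 * ρ p := by
    intro p hp t ht
    have hflat : flatOp P (p.1, t • p.2) = t ^ 2 * flatOp P p := by
      unfold flatOp
      rw [Finset.mul_sum]
      refine Finset.sum_congr rfl fun k _ => ?_
      have := hpdxhom k p hp t ht
      simp only [Pi.smul_apply, smul_eq_mul] at this ⊢
      rw [this]; ring
    rw [hρdef, hρdef, hflat]
    have := hPhom p.1 hp.1 p.2 hp.2 t ht
    simp only [Prod.mk.eta] at this
    rw [this]; ring
  have hEulρ : ∀ p ∈ sprayDom Ω, ∑ j, p.2 j * pdy ρ j p = 2 * ρ p := by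
    intro p hp
    have := euler_hom ρ p 2 (hρdAt p hp) (hρhom p hp)
    simpa using this
  -- Ncon formula
  have hN : ∀ (j i : Fin n), ∀ p ∈ sprayDom Ω,
      Ncon G j i p = P p * (Pi.single i 1 : Fin n → ℝ) j + p.2 j * pdy P i p := by
    intro j i p hp
    have hL : HasFDerivAt (fun q : (Fin n → ℝ) × (Fin n → ℝ) => q.2 j)
        ((ContinuousLinearMap.proj j).comp (ContinuousLinearMap.snd ℝ (Fin n → ℝ) (Fin n → ℝ))) p :=
      ((ContinuousLinearMap.proj j).comp
        (ContinuousLinearMap.snd ℝ (Fin n → ℝ) (Fin n → ℝ))).hasFDerivAt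
    have hGj : G j = fun q => P q * q.2 j := funext fun q => hGdef j q
    have hM : HasFDerivAt (G j)
        (P p • ((ContinuousLinearMap.proj j).comp (ContinuousLinearMap.snd ℝ (Fin n → ℝ) (Fin n → ℝ)))
          + p.2 j • fderiv ℝ P p) p := by
      rw [hGj]
      exact (hPdAt p hp).hasFDerivAt.mul hL
    show pdy (G j) i p = _
    rw [pdy, hM.fderiv]
    simp [pdy]
  -- key pointwise identity
  have key : ∀ (i : Fin n), ∀ p ∈ sprayDom Ω,
      pdx (fun q => Real.exp (-2 * g q) * ρ q) i p
          + (1 / 2) * flatOp (fun q => Real.exp (-2 * g q)) p * pdy ρ i p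
        = Real.exp (-2 * g p) * (pdx ρ i p - ∑ j, Ncon G j i p * pdy ρ j p) := by
    intro i p hp
    have hgd := hgdAt p hp
    have hE : HasFDerivAt (fun q => Real.exp (-2 * g q))
        (Real.exp (-2 * g p) • ((-2 : ℝ) • fderiv ℝ g p)) p :=
      (hgd.hasFDerivAt.const_mul (-2)).exp
    have hpdxE : ∀ k : Fin n, pdx (fun q => Real.exp (-2 * g q)) k p
        = Real.exp (-2 * g p) * (-2 * pdx g k p) := by
      intro k
      rw [pdx, hE.fderiv]
      simp [pdx, mul_comm]
    have hflatE : flatOp (fun q => Real.exp (-2 * g q)) p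
        = -2 * Real.exp (-2 * g p) * P p := by
      unfold flatOp
      calc ∑ k, p.2 k * pdx (fun q => Real.exp (-2 * g q)) k p
          = (-2 * Real.exp (-2 * g p)) * ∑ k, p.2 k * pdy P k p := by
            rw [Finset.mul_sum]
            refine Finset.sum_congr rfl fun k _ => ?_
            rw [hpdxE k, hPg k p hp]; ring
        _ = -2 * Real.exp (-2 * g p) * P p := by rw [hEulP p hp]
    have hM : HasFDerivAt (fun q => Real.exp (-2 * g q) * ρ q)
        (Real.exp (-2 * g p) • fderiv ℝ ρ p
          + ρ p • (Real.exp (-2 * g p) • ((-2 : ℝ) • fderiv ℝ g p))) p :=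
      hE.mul (hρdAt p hp).hasFDerivAt
    have hpdxM : pdx (fun q => Real.exp (-2 * g q) * ρ q) i p
        = Real.exp (-2 * g p) * pdx ρ i p
          + ρ p * (Real.exp (-2 * g p) * (-2 * pdx g i p)) := by
      rw [pdx, hM.fderiv]
      simp [pdx, mul_comm, mul_assoc]
    have hNsum : ∑ j, Ncon G j i p * pdy ρ j p
        = P p * pdy ρ i p + pdx g i p * (2 * ρ p) := by
      calc ∑ j, Ncon G j i p * pdy ρ j p
          = ∑ j, (P p * (Pi.single i 1 : Fin n → ℝ) j + p.2 j * pdy P i p) * pdy ρ j p := by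
            refine Finset.sum_congr rfl fun j _ => ?_
            rw [hN j i p hp]
        _ = (∑ j, P p * (Pi.single i 1 : Fin n → ℝ) j * pdy ρ j p)
            + ∑ j, p.2 j * pdy P i p * pdy ρ j p := by
            rw [← Finset.sum_add_distrib]
            refine Finset.sum_congr rfl fun j _ => ?_
            ring
        _ = P p * pdy ρ i p + pdy P i p * ∑ j, p.2 j * pdy ρ j p := by
            congr 1
            · simp only [Pi.single_apply, mul_ite, mul_one, mul_zero, ite_mul, zero_mul]
              rw [Finset.sum_ite_eq' Finset.univ i (fun x => P p * pdy ρ x p)]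
              simp
            · rw [Finset.mul_sum]
              refine Finset.sum_congr rfl fun j _ => ?_
              ring
        _ = P p * pdy ρ i p + pdx g i p * (2 * ρ p) := by
            rw [hEulρ p hp, hPg i p hp]
    rw [hpdxM, hflatE, hNsum]
    ring
  constructor
  · intro h i p hp
    rw [key i p hp, h i p hp, mul_zero]
  · intro h i p hp
    have hk := key i p hp
    rw [h i p hp] at hk
    have := mul_eq_zero.mp hk.symm
    exact this.resolve_left (Real.exp_ne_zero _)
end

section
/- (Hilbert's fourth problem, constant curvature −1.) Let Ω = {x ∈ ℝⁿ : |x| < 1}, P(x,y) = ⟨x,y⟩/(1−|x|²), and consider the projectively flat spray G^i = P y^i on Ω × (ℝⁿ∖{0}), with N^j_i = ∂G^j/∂y^i. Let F²(x,y) = (|y|²(1−|x|²) + ⟨x,y⟩²)/(1−|x|²)² (the squared Klein metric). Then: (1) the Ricci scalar satisfies ρ := P² − S₀P = −F², where S₀P = Σ_k y^k ∂P/∂x^k; (2) d_hF² = 0, i.e. ∂F²/∂x^i = Σ_j N^j_i ∂F²/∂y^j for all i. Hence the spray is the geodesic spray of the Klein metric, of constant flag curvature κ = ρ/F² = −1.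 -/
open Real Finset

/-! Write `A = 1 - |x|²`, `b = ⟨x,y⟩`, `c = |y|²`, so that `P = b / A` and `F² = (cA + b²) / A²`;
the differentials of `P` and `F²` follow from those of the three invariants. Since
`S₀P = dP(y, 0)`, the identity `ρ = -F²` is then a rational identity in `A, b, c`. For `G^i = P y^i`
one has `N^j_i = P δ^j_i + y^j ∂P/∂y^i`, so by Euler's relation `y^j ∂F²/∂y^j = 2F²` the
horizontal condition reads `∂F²/∂x^i = P ∂F²/∂y^i + 2F² ∂P/∂y^i`, again a rational identity. -/

section Calculus

variable {E : Type*} [NormedAddCommGroup E] [NormedSpace ℝ E] {x : E}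

theorem fderiv_fun_div_apply {c d : E → ℝ} (hc : DifferentiableAt ℝ c x)
    (hd : DifferentiableAt ℝ d x) (hx : d x ≠ 0) (v : E) :
    fderiv ℝ (fun y => c y / d y) x v =
      (fderiv ℝ c x v * d x - c x * fderiv ℝ d x v) / d x ^ 2 := by
  have hinv : fderiv ℝ (fun y => (d y)⁻¹) x v = -fderiv ℝ d x v / d x ^ 2 := by
    rw [show (fun y => (d y)⁻¹) = Inv.inv ∘ d from rfl,
      fderiv_comp x (differentiableAt_inv hx) hd, fderiv_inv]
    simp [div_eq_mul_inv, mul_comm]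
  simp only [div_eq_mul_inv]
  rw [fderiv_fun_mul (d := fun y => (d y)⁻¹) hc (hd.inv hx)]
  simp only [add_apply, smul_apply, smul_eq_mul, ← div_eq_mul_inv, hinv]
  field_simp
  ring

variable {n : ℕ} {f g : E → Fin n → ℝ}

@[fun_prop]
theorem DifferentiableAt.dotp (hf : DifferentiableAt ℝ f x) (hg : DifferentiableAt ℝ g x) :
    DifferentiableAt ℝ (fun y => dotp (f y) (g y)) x := by
  unfold _root_.dotp
  fun_prop

theorem fderiv_dotp_apply (hf : DifferentiableAt ℝ f x) (hg : DifferentiableAt ℝ g x) (v : E) :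
    fderiv ℝ (fun y => dotp (f y) (g y)) x v =
      dotp (fderiv ℝ f x v) (g x) + dotp (f x) (fderiv ℝ g x v) := by
  have hfi := differentiableAt_pi.1 hf
  have hgi := differentiableAt_pi.1 hg
  unfold _root_.dotp
  rw [fderiv_fun_sum (A := fun i y => f y i * g y i) (fun i _ => (hfi i).mul (hgi i)),
    ← Finset.sum_add_distrib]
  simp [fderiv_fun_mul (hfi _) (hgi _), fderiv_apply hf, fderiv_apply hg]
  exact Finset.sum_congr rfl fun i _ => by ring

theorem nsq_eq_dotp (v : Fin n → ℝ) : nsq v = dotp v v := by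
  simp only [nsq, dotp, sq]

theorem dotp_comm (v w : Fin n → ℝ) : dotp v w = dotp w v := by
  simp only [dotp, mul_comm]

@[fun_prop]
theorem DifferentiableAt.nsq (hf : DifferentiableAt ℝ f x) :
    DifferentiableAt ℝ (fun y => nsq (f y)) x := by
  simpa only [nsq_eq_dotp] using hf.dotp hf

theorem fderiv_nsq_apply (hf : DifferentiableAt ℝ f x) (v : E) :
    fderiv ℝ (fun y => nsq (f y)) x v = 2 * dotp (f x) (fderiv ℝ f x v) := by
  simp only [nsq_eq_dotp]
  rw [fderiv_dotp_apply hf hf, dotp_comm]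
  ring

end Calculus

section Coordinates

variable {n : ℕ}

@[simp]
theorem dotp_single_left (i : Fin n) (w : Fin n → ℝ) : dotp (Pi.single i 1) w = w i := by
  simp [dotp, Pi.single_apply]

@[simp]
theorem dotp_single_right (i : Fin n) (w : Fin n → ℝ) : dotp w (Pi.single i 1) = w i := by
  simp [dotp, Pi.single_apply]

@[simp]
theorem dotp_zero_left (w : Fin n → ℝ) : dotp 0 w = 0 := by simp [dotp]

@[simp]
theorem dotp_zero_right (w : Fin n → ℝ) : dotp w 0 = 0 := by simp [dotp]

variable (p v : (Fin n → ℝ) × (Fin n → ℝ)) {f P : (Fin n → ℝ) × (Fin n → ℝ) → ℝ}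

theorem fderiv_dotp_fst_snd_apply :
    fderiv ℝ (fun q : (Fin n → ℝ) × (Fin n → ℝ) => dotp q.1 q.2) p v =
      dotp v.1 p.2 + dotp p.1 v.2 := by
  rw [fderiv_dotp_apply differentiableAt_fst differentiableAt_snd, fderiv_fst, fderiv_snd]
  rfl

theorem fderiv_nsq_fst_apply :
    fderiv ℝ (fun q : (Fin n → ℝ) × (Fin n → ℝ) => nsq q.1) p v = 2 * dotp p.1 v.1 := by
  rw [fderiv_nsq_apply differentiableAt_fst, fderiv_fst]
  rfl

theorem fderiv_nsq_snd_apply :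
    fderiv ℝ (fun q : (Fin n → ℝ) × (Fin n → ℝ) => nsq q.2) p v = 2 * dotp p.2 v.2 := by
  rw [fderiv_nsq_apply differentiableAt_snd, fderiv_snd]
  rfl

theorem sum_mul_pdx (w : Fin n → ℝ) : ∑ k, w k * pdx f k p = fderiv ℝ f p (w, 0) := by
  have hw : ((w, 0) : (Fin n → ℝ) × (Fin n → ℝ)) = ∑ k, w k • (Pi.single k 1, 0) := by
    ext j <;> simp [Prod.fst_sum, Prod.snd_sum, Pi.single_apply]
  rw [hw, map_sum]
  simp only [map_smul, smul_eq_mul, pdx]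

theorem sum_mul_pdy (w : Fin n → ℝ) : ∑ k, w k * pdy f k p = fderiv ℝ f p (0, w) := by
  have hw : ((0, w) : (Fin n → ℝ) × (Fin n → ℝ)) = ∑ k, w k • (0, Pi.single k 1) := by
    ext j <;> simp [Prod.fst_sum, Prod.snd_sum, Pi.single_apply]
  rw [hw, map_sum]
  simp only [map_smul, smul_eq_mul, pdy]

theorem pdy_snd_apply (i j : Fin n) :
    pdy (fun q : (Fin n → ℝ) × (Fin n → ℝ) => q.2 j) i p = (Pi.single i 1 : Fin n → ℝ) j := by
  rw [pdy, fderiv_apply (Φ := Prod.snd) differentiableAt_snd j, fderiv_snd]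
  rfl

theorem Ncon_projective (hP : DifferentiableAt ℝ P p) (i j : Fin n) :
    Ncon (fun j q => P q * q.2 j) j i p =
      P p * (Pi.single i 1 : Fin n → ℝ) j + p.2 j * pdy P i p := by
  have hy : DifferentiableAt ℝ (fun q : (Fin n → ℝ) × (Fin n → ℝ) => q.2 j) p := by fun_prop
  rw [Ncon, pdy, fderiv_fun_mul hP hy, add_apply, smul_apply, smul_apply, smul_eq_mul,
    smul_eq_mul, ← pdy, ← pdy, pdy_snd_apply]

theorem sum_Ncon_projective_mul (hP : DifferentiableAt ℝ P p) (i : Fin n) (w : Fin n → ℝ) :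
    ∑ j, Ncon (fun j q => P q * q.2 j) j i p * w j = P p * w i + pdy P i p * dotp p.2 w := by
  simp only [Ncon_projective p hP, add_mul, Finset.sum_add_distrib, dotp, Finset.mul_sum]
  congr 1
  · simp [Pi.single_apply]
  · exact Finset.sum_congr rfl fun j _ => by ring

end Coordinates

section Klein

variable {n : ℕ}

noncomputable def kleinP (p : (Fin n → ℝ) × (Fin n → ℝ)) : ℝ := dotp p.1 p.2 / (1 - nsq p.1)

noncomputable def kleinFsq (p : (Fin n → ℝ) × (Fin n → ℝ)) : ℝ :=
  (nsq p.2 * (1 - nsq p.1) + dotp p.1 p.2 ^ 2) / (1 - nsq p.1) ^ 2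

variable {p : (Fin n → ℝ) × (Fin n → ℝ)}

theorem differentiableAt_kleinP (hp : nsq p.1 ≠ 1) : DifferentiableAt ℝ kleinP p := by
  unfold kleinP
  fun_prop (disch := exact sub_ne_zero.2 hp.symm)

theorem fderiv_kleinP_apply (hp : nsq p.1 ≠ 1) (v : (Fin n → ℝ) × (Fin n → ℝ)) :
    fderiv ℝ kleinP p v = ((dotp v.1 p.2 + dotp p.1 v.2) * (1 - nsq p.1)
      + 2 * dotp p.1 p.2 * dotp p.1 v.1) / (1 - nsq p.1) ^ 2 := by
  have hA : 1 - nsq p.1 ≠ 0 := sub_ne_zero.2 hp.symm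
  unfold kleinP
  simp (disch := first | fun_prop | assumption) only [fderiv_fun_div_apply,
    fderiv_const_sub, neg_apply, fderiv_dotp_fst_snd_apply, fderiv_nsq_fst_apply]
  ring

theorem fderiv_kleinFsq_apply (hp : nsq p.1 ≠ 1) (v : (Fin n → ℝ) × (Fin n → ℝ)) :
    fderiv ℝ kleinFsq p v = (2 * dotp p.2 v.2 * (1 - nsq p.1) ^ 2
      + 2 * dotp p.1 p.2 * (dotp v.1 p.2 + dotp p.1 v.2) * (1 - nsq p.1)
      + 2 * (nsq p.2 * (1 - nsq p.1) + 2 * dotp p.1 p.2 ^ 2) * dotp p.1 v.1)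
        / (1 - nsq p.1) ^ 3 := by
  have hA : 1 - nsq p.1 ≠ 0 := sub_ne_zero.2 hp.symm
  have hA2 : (1 - nsq p.1) ^ 2 ≠ 0 := pow_ne_zero 2 hA
  unfold kleinFsq
  simp (disch := first | fun_prop | assumption) only [fderiv_fun_div_apply, fderiv_fun_add,
    fderiv_fun_mul, fderiv_fun_pow, add_apply, smul_apply, smul_eq_mul, fderiv_const_sub,
    neg_apply, fderiv_dotp_fst_snd_apply, fderiv_nsq_fst_apply, fderiv_nsq_snd_apply]
  field_simp
  ring

theorem kleinP_sq_sub_flatOp (hp : nsq p.1 ≠ 1) : kleinP p ^ 2 - flatOp kleinP p = -kleinFsq p := by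
  have hA : 1 - nsq p.1 ≠ 0 := sub_ne_zero.2 hp.symm
  rw [flatOp, sum_mul_pdx, fderiv_kleinP_apply hp]
  simp only [dotp_zero_right, ← nsq_eq_dotp, kleinP, kleinFsq]
  field_simp
  ring

theorem fderiv_kleinFsq_euler (hp : nsq p.1 ≠ 1) :
    fderiv ℝ kleinFsq p (0, p.2) = 2 * kleinFsq p := by
  have hA : 1 - nsq p.1 ≠ 0 := sub_ne_zero.2 hp.symm
  rw [fderiv_kleinFsq_apply hp]
  simp only [dotp_zero_left, dotp_zero_right, ← nsq_eq_dotp, kleinFsq]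
  field_simp
  ring

theorem pdx_kleinFsq (hp : nsq p.1 ≠ 1) (i : Fin n) :
    pdx kleinFsq i p = kleinP p * pdy kleinFsq i p + pdy kleinP i p * (2 * kleinFsq p) := by
  have hA : 1 - nsq p.1 ≠ 0 := sub_ne_zero.2 hp.symm
  simp only [pdx, pdy, fderiv_kleinFsq_apply hp, fderiv_kleinP_apply hp, dotp_zero_left,
    dotp_zero_right, dotp_single_left, dotp_single_right, kleinP, kleinFsq]
  field_simp
  ring

theorem pdx_kleinFsq_eq_sum_Ncon (hp : nsq p.1 ≠ 1) (i : Fin n) :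
    pdx kleinFsq i p = ∑ j, Ncon (fun j q => kleinP q * q.2 j) j i p * pdy kleinFsq j p := by
  rw [sum_Ncon_projective_mul p (differentiableAt_kleinP hp), dotp, sum_mul_pdy,
    fderiv_kleinFsq_euler hp, pdx_kleinFsq hp]

end Klein

/-- Hilbert's fourth problem, constant curvature `-1`. For
`P(x,y) = ⟨x,y⟩/(1-|x|²)` on the unit ball and `G^i = P y^i`, the squared Klein
metric `F²(x,y) = (|y|²(1-|x|²) + ⟨x,y⟩²)/(1-|x|²)²` satisfies
`ρ = P² - S₀P = -F²` and `d_hF² = 0`; hence the spray is the geodesic spray of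
the Klein metric, of constant flag curvature `κ = ρ/F² = -1`. -/
theorem hilbert_fourth_klein
    (n : ℕ)
    (P Fsq : ((Fin n → ℝ) × (Fin n → ℝ)) → ℝ)
    (hP : ∀ p, P p = dotp p.1 p.2 / (1 - nsq p.1))
    (hFsq : ∀ p, Fsq p =
      (nsq p.2 * (1 - nsq p.1) + dotp p.1 p.2 ^ 2) / (1 - nsq p.1) ^ 2)
    (G : Fin n → ((Fin n → ℝ) × (Fin n → ℝ)) → ℝ)
    (hGdef : ∀ i p, G i p = P p * p.2 i) :
    ∀ p ∈ sprayDom {x : Fin n → ℝ | nsq x < 1},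
      P p ^ 2 - flatOp P p = -Fsq p ∧
      (∀ i, pdx Fsq i p = ∑ j, Ncon G j i p * pdy Fsq j p) := by
  obtain rfl : P = kleinP := funext hP
  obtain rfl : Fsq = kleinFsq := funext hFsq
  obtain rfl : G = fun i q => kleinP q * q.2 i := funext fun i => funext (hGdef i)
  rintro p ⟨hx, -⟩
  have hp : nsq p.1 ≠ 1 := (show nsq p.1 < 1 from hx).ne
  exact ⟨kleinP_sq_sub_flatOp hp, pdx_kleinFsq_eq_sum_Ncon hp⟩
end

section
/- Let Ω ⊆ ℝ² be open, g: ℝ → ℝ smooth and positive, and set φ(x) = ψ(x) = 2 g'(x¹+x²)/g(x¹+x²). Consider the spray G¹ = ½ φ(x)(y¹)², G² = ½ ψ(x)(y²)² on A = Ω × {y¹ > 0, y² > 0}, with N^j_i = ∂G^j/∂y^i. Then F(x,y) = √(y¹y²) · g(x¹+x²) is positive and positively 1-homogeneous in y on A, satisfies d_hF = 0 (i.e. ∂F/∂x^i = Σ_j N^j_i ∂F/∂y^j for i = 1,2), and the vertical Hessian (½ ∂²F²/∂y^i∂y^j) is invertible at every point of A. Hence F is a conic pseudo-Finsler function metricizing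 this spray. -/
open Real Finset

noncomputable def clX : ((Fin 2 → ℝ) × (Fin 2 → ℝ)) →L[ℝ] ℝ :=
  ((ContinuousLinearMap.proj 0 : (Fin 2 → ℝ) →L[ℝ] ℝ) + ContinuousLinearMap.proj 1).comp
    (ContinuousLinearMap.fst ℝ _ _)

noncomputable def clY (i : Fin 2) : ((Fin 2 → ℝ) × (Fin 2 → ℝ)) →L[ℝ] ℝ :=
  (ContinuousLinearMap.proj i).comp (ContinuousLinearMap.snd ℝ _ _)

@[simp] lemma clX_apply (z : (Fin 2 → ℝ) × (Fin 2 → ℝ)) : clX z = z.1 0 + z.1 1 := rfl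
@[simp] lemma clY_apply (i : Fin 2) (z : (Fin 2 → ℝ) × (Fin 2 → ℝ)) : clY i z = z.2 i := rfl

lemma hasX (p : (Fin 2 → ℝ) × (Fin 2 → ℝ)) :
    HasFDerivAt (fun q : (Fin 2 → ℝ) × (Fin 2 → ℝ) => q.1 0 + q.1 1) clX p := clX.hasFDerivAt

lemma hasY (i : Fin 2) (p : (Fin 2 → ℝ) × (Fin 2 → ℝ)) :
    HasFDerivAt (fun q : (Fin 2 → ℝ) × (Fin 2 → ℝ) => q.2 i) (clY i) p := (clY i).hasFDerivAt

lemma hasA (p : (Fin 2 → ℝ) × (Fin 2 → ℝ)) :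
    HasFDerivAt (fun q : (Fin 2 → ℝ) × (Fin 2 → ℝ) => q.2 0 * q.2 1)
      (p.2 0 • clY 1 + p.2 1 • clY 0) p := (hasY 0 p).mul (hasY 1 p)

/-- Derivative of `q ↦ c (q.1 0 + q.1 1)` for a differentiable `c`. -/
lemma hasComp {c : ℝ → ℝ} (p : (Fin 2 → ℝ) × (Fin 2 → ℝ))
    (hc : DifferentiableAt ℝ c (p.1 0 + p.1 1)) :
    HasFDerivAt (fun q : (Fin 2 → ℝ) × (Fin 2 → ℝ) => c (q.1 0 + q.1 1))
      (deriv c (p.1 0 + p.1 1) • clX) p :=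
  hc.hasDerivAt.comp_hasFDerivAt p (hasX p)

lemma hasGC {g : ℝ → ℝ} (hg : ContDiff ℝ (⊤ : ℕ∞) g) (p : (Fin 2 → ℝ) × (Fin 2 → ℝ)) :
    HasFDerivAt (fun q : (Fin 2 → ℝ) × (Fin 2 → ℝ) => g (q.1 0 + q.1 1))
      (deriv g (p.1 0 + p.1 1) • clX) p :=
  hasComp p (hg.differentiable (by simp) _)

lemma hasFF {g : ℝ → ℝ} (hg : ContDiff ℝ (⊤ : ℕ∞) g) (p : (Fin 2 → ℝ) × (Fin 2 → ℝ))
    (h0 : 0 < p.2 0) (h1 : 0 < p.2 1) :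
    HasFDerivAt (fun q : (Fin 2 → ℝ) × (Fin 2 → ℝ) => Real.sqrt (q.2 0 * q.2 1) * g (q.1 0 + q.1 1))
      (Real.sqrt (p.2 0 * p.2 1) • (deriv g (p.1 0 + p.1 1) • clX)
        + g (p.1 0 + p.1 1) • ((1 / (2 * Real.sqrt (p.2 0 * p.2 1))) •
            (p.2 0 • clY 1 + p.2 1 • clY 0))) p := by
  have hsq : HasFDerivAt (fun q : (Fin 2 → ℝ) × (Fin 2 → ℝ) => Real.sqrt (q.2 0 * q.2 1))
      ((1 / (2 * Real.sqrt (p.2 0 * p.2 1))) • (p.2 0 • clY 1 + p.2 1 • clY 0)) p :=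
    (Real.hasDerivAt_sqrt (ne_of_gt (mul_pos h0 h1))).comp_hasFDerivAt p (hasA p)
  exact hsq.mul (hasGC hg p)

/-- Derivative of `n q = q.2 0 * q.2 1 * g(q.1 0 + q.1 1)^2`. -/
lemma hasNN {g : ℝ → ℝ} (hg : ContDiff ℝ (⊤ : ℕ∞) g) (p : (Fin 2 → ℝ) × (Fin 2 → ℝ)) :
    HasFDerivAt (fun q : (Fin 2 → ℝ) × (Fin 2 → ℝ) => q.2 0 * q.2 1 * g (q.1 0 + q.1 1) ^ 2)
      ((p.2 0 * p.2 1) • (g (p.1 0 + p.1 1) • (deriv g (p.1 0 + p.1 1) • clX)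
          + g (p.1 0 + p.1 1) • (deriv g (p.1 0 + p.1 1) • clX))
        + (g (p.1 0 + p.1 1) * g (p.1 0 + p.1 1)) • (p.2 0 • clY 1 + p.2 1 • clY 0)) p := by
  simp only [pow_two]
  exact (hasA p).mul ((hasGC hg p).mul (hasGC hg p))

/-- Derivative of `q ↦ g(q.1 0 + q.1 1)^2 * q.2 i`. -/
lemma hasG2Y {g : ℝ → ℝ} (hg : ContDiff ℝ (⊤ : ℕ∞) g) (i : Fin 2) (p : (Fin 2 → ℝ) × (Fin 2 → ℝ)) :
    HasFDerivAt (fun q : (Fin 2 → ℝ) × (Fin 2 → ℝ) => g (q.1 0 + q.1 1) ^ 2 * q.2 i)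
      ((g (p.1 0 + p.1 1) ^ 2) • clY i
        + (p.2 i) • (g (p.1 0 + p.1 1) • (deriv g (p.1 0 + p.1 1) • clX)
          + g (p.1 0 + p.1 1) • (deriv g (p.1 0 + p.1 1) • clX))) p := by
  have h := ((hasGC hg p).mul (hasGC hg p)).mul (hasY i p)
  simp only [pow_two]
  exact h

/-- For `φ = ψ = 2g'(x¹+x²)/g(x¹+x²)` (`g` smooth, positive), the
function `F(x,y) = √(y¹y²) · g(x¹+x²)` is a conic pseudo-Finsler function on
`A = Ω × {y¹ > 0, y² > 0}` metricizing the spray `G¹ = ½φ(y¹)²`,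
`G² = ½ψ(y²)²`: it is positive, `1`-homogeneous in `y`, satisfies `d_hF = 0`,
and its vertical Hessian is invertible on `A`. -/
theorem conic_pseudo_finsler_example
    (Ω : Set (Fin 2 → ℝ)) (hΩ : IsOpen Ω)
    (g : ℝ → ℝ) (hg : ContDiff ℝ (⊤ : ℕ∞) g) (hgpos : ∀ t, 0 < g t)
    (φ ψ : (Fin 2 → ℝ) → ℝ)
    (hφ : ∀ x, φ x = 2 * deriv g (x 0 + x 1) / g (x 0 + x 1))
    (hψ : ∀ x, ψ x = 2 * deriv g (x 0 + x 1) / g (x 0 + x 1))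
    (G : Fin 2 → ((Fin 2 → ℝ) × (Fin 2 → ℝ)) → ℝ)
    (hGdef : ∀ p, G 0 p = (1 / 2) * φ p.1 * p.2 0 ^ 2 ∧
      G 1 p = (1 / 2) * ψ p.1 * p.2 1 ^ 2)
    (F : ((Fin 2 → ℝ) × (Fin 2 → ℝ)) → ℝ)
    (hF : ∀ p, F p = Real.sqrt (p.2 0 * p.2 1) * g (p.1 0 + p.1 1)) :
    ∀ p ∈ Ω ×ˢ {y : Fin 2 → ℝ | 0 < y 0 ∧ 0 < y 1},
      0 < F p ∧
      (∀ l : ℝ, 0 < l → F (p.1, l • p.2) = l * F p) ∧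
      (∀ i, pdx F i p = ∑ j, Ncon G j i p * pdy F j p) ∧
      (Matrix.of fun i j => (1 / 2) * pdy (pdy (fun q => F q ^ 2) j) i p).det ≠ 0 := by
  -- preliminaries
  have hg' : ContDiff ℝ ((⊤:ℕ∞) : WithTop ℕ∞) g := hg.of_le (by simp)
  have hdg : Differentiable ℝ (deriv g) :=
    (contDiff_infty_iff_deriv.mp hg').2.differentiable (by norm_num)
  have hFfun : F = fun q : (Fin 2 → ℝ) × (Fin 2 → ℝ) =>
      Real.sqrt (q.2 0 * q.2 1) * g (q.1 0 + q.1 1) := funext hF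
  rintro p ⟨hpΩ, hy0, hy1⟩
  -- membership already unfolded
  set t : ℝ := p.1 0 + p.1 1 with ht
  have hy01 : 0 < p.2 0 * p.2 1 := mul_pos hy0 hy1
  set s : ℝ := Real.sqrt (p.2 0 * p.2 1) with hsdef
  have hs : 0 < s := Real.sqrt_pos.mpr hy01
  have hssq : s ^ 2 = p.2 0 * p.2 1 := Real.sq_sqrt hy01.le
  have hFd : HasFDerivAt F
      (s • (deriv g t • clX) + g t • ((1 / (2 * s)) • (p.2 0 • clY 1 + p.2 1 • clY 0))) p := by
    rw [hFfun]; exact hasFF hg p hy0 hy1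
  -- values of the first derivatives of F
  have hpdx : ∀ i : Fin 2, pdx F i p = s * deriv g t := by
    refine Fin.forall_fin_two.mpr ⟨?_, ?_⟩ <;>
      · rw [pdx, hFd.fderiv]
        simp [Pi.single_apply]
  have hpdy0 : pdy F 0 p = g t * (1 / (2 * s) * p.2 1) := by
    rw [pdy, hFd.fderiv]; simp [Pi.single_apply]
  have hpdy1 : pdy F 1 p = g t * (1 / (2 * s) * p.2 0) := by
    rw [pdy, hFd.fderiv]; simp [Pi.single_apply]
  -- the connection coefficients
  have hh : DifferentiableAt ℝ (fun u => deriv g u / g u) t :=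
    (hdg t).div ((hg.differentiable (by simp)) t) (hgpos t).ne'
  have hG0fun : G 0 = fun q : (Fin 2 → ℝ) × (Fin 2 → ℝ) =>
      (fun u => deriv g u / g u) (q.1 0 + q.1 1) * (q.2 0 * q.2 0) := by
    funext q
    rw [(hGdef q).1, hφ]
    field_simp
  have hG1fun : G 1 = fun q : (Fin 2 → ℝ) × (Fin 2 → ℝ) =>
      (fun u => deriv g u / g u) (q.1 0 + q.1 1) * (q.2 1 * q.2 1) := by
    funext q
    rw [(hGdef q).2, hψ]
    field_simp
  have hG0d : HasFDerivAt (G 0)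
      ((deriv g t / g t) • (p.2 0 • clY 0 + p.2 0 • clY 0)
        + (p.2 0 * p.2 0) • (deriv (fun u => deriv g u / g u) t • clX)) p := by
    rw [hG0fun]
    exact (hasComp p hh).mul ((hasY 0 p).mul (hasY 0 p))
  have hG1d : HasFDerivAt (G 1)
      ((deriv g t / g t) • (p.2 1 • clY 1 + p.2 1 • clY 1)
        + (p.2 1 * p.2 1) • (deriv (fun u => deriv g u / g u) t • clX)) p := by
    rw [hG1fun]
    exact (hasComp p hh).mul ((hasY 1 p).mul (hasY 1 p))
  have hN00 : Ncon G 0 0 p = 2 * (deriv g t / g t) * p.2 0 := by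
    rw [Ncon, pdy, hG0d.fderiv]; simp [Pi.single_apply]; ring
  have hN01 : Ncon G 0 1 p = 0 := by
    rw [Ncon, pdy, hG0d.fderiv]; simp [Pi.single_apply]
  have hN10 : Ncon G 1 0 p = 0 := by
    rw [Ncon, pdy, hG1d.fderiv]; simp [Pi.single_apply]
  have hN11 : Ncon G 1 1 p = 2 * (deriv g t / g t) * p.2 1 := by
    rw [Ncon, pdy, hG1d.fderiv]; simp [Pi.single_apply]; ring
  refine ⟨?_, ?_, ?_, ?_⟩
  · rw [hF]
    exact mul_pos hs (hgpos _)
  · intro l hl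
    rw [hF, hF]
    simp only [Pi.smul_apply, smul_eq_mul]
    rw [show l * p.2 0 * (l * p.2 1) = l ^ 2 * (p.2 0 * p.2 1) by ring,
      Real.sqrt_mul (sq_nonneg l), Real.sqrt_sq hl.le]
    ring
  · refine Fin.forall_fin_two.mpr ⟨?_, ?_⟩
    · rw [Fin.sum_univ_two, hN00, hN10, hpdx 0, hpdy0, hpdy1]
      have hgne : g t ≠ 0 := (hgpos t).ne'
      field_simp
      linear_combination (2 * deriv g t) * hssq
    · rw [Fin.sum_univ_two, hN01, hN11, hpdx 1, hpdy0, hpdy1]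
      have hgne : g t ≠ 0 := (hgpos t).ne'
      field_simp
      linear_combination (2 * deriv g t) * hssq
  · -- Hessian part
    set n : ((Fin 2 → ℝ) × (Fin 2 → ℝ)) → ℝ :=
      fun q => q.2 0 * q.2 1 * g (q.1 0 + q.1 1) ^ 2 with hn
    have hUopen : IsOpen {q : (Fin 2 → ℝ) × (Fin 2 → ℝ) | 0 < q.2 0 ∧ 0 < q.2 1} :=
      (isOpen_lt continuous_const ((continuous_apply 0).comp continuous_snd)).inter
        (isOpen_lt continuous_const ((continuous_apply 1).comp continuous_snd))
    have hmem : {q : (Fin 2 → ℝ) × (Fin 2 → ℝ) | 0 < q.2 0 ∧ 0 < q.2 1} ∈ nhds p :=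
      hUopen.mem_nhds ⟨hy0, hy1⟩
    have hEqOn : Set.EqOn (fun q => F q ^ 2) n
        {q : (Fin 2 → ℝ) × (Fin 2 → ℝ) | 0 < q.2 0 ∧ 0 < q.2 1} := by
      rintro q ⟨hq0, hq1⟩
      simp only [hn, hF]
      rw [mul_pow, Real.sq_sqrt (mul_pos hq0 hq1).le]
    -- first y-derivatives of n
    have hpn0 : ∀ q, pdy n 0 q = g (q.1 0 + q.1 1) ^ 2 * q.2 1 := by
      intro q
      rw [pdy, (hasNN hg q).fderiv]
      simp [Pi.single_apply]
      all_goals exact Or.inl (pow_two _).symm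
    have hpn1 : ∀ q, pdy n 1 q = g (q.1 0 + q.1 1) ^ 2 * q.2 0 := by
      intro q
      rw [pdy, (hasNN hg q).fderiv]
      simp [Pi.single_apply]
      all_goals exact Or.inl (pow_two _).symm
    -- pdy (F^2) agrees with pdy n near p
    have hfe : ∀ j : Fin 2, pdy (fun q => F q ^ 2) j =ᶠ[nhds p] pdy n j := by
      intro j
      filter_upwards [hUopen.eventually_mem (⟨hy0, hy1⟩ :
        p ∈ {q : (Fin 2 → ℝ) × (Fin 2 → ℝ) | 0 < q.2 0 ∧ 0 < q.2 1})] with q hq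
      rw [pdy, pdy,
        Filter.EventuallyEq.fderiv_eq (Filter.eventuallyEq_of_mem (hUopen.mem_nhds hq) hEqOn)]
    have hsecond : ∀ i j : Fin 2,
        pdy (pdy (fun q => F q ^ 2) j) i p = pdy (pdy n j) i p := by
      intro i j
      rw [pdy, pdy, Filter.EventuallyEq.fderiv_eq (hfe j)]
    -- second derivatives of n
    have h2nd0 : ∀ i : Fin 2, pdy (pdy n 0) i p =
        (if i = (1 : Fin 2) then g t ^ 2 else 0) := by
      intro i
      have hfun : pdy n 0 = fun q => g (q.1 0 + q.1 1) ^ 2 * q.2 1 := funext hpn0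
      rw [hfun, pdy, (hasG2Y hg 1 p).fderiv]
      simp [Pi.single_apply, eq_comm]
      rfl
    have h2nd1 : ∀ i : Fin 2, pdy (pdy n 1) i p =
        (if i = (0 : Fin 2) then g t ^ 2 else 0) := by
      intro i
      have hfun : pdy n 1 = fun q => g (q.1 0 + q.1 1) ^ 2 * q.2 0 := funext hpn1
      rw [hfun, pdy, (hasG2Y hg 0 p).fderiv]
      simp [Pi.single_apply, eq_comm]
      rfl
    rw [Matrix.det_fin_two]
    simp only [Matrix.of_apply]
    rw [hsecond 0 0, hsecond 1 1, hsecond 0 1, hsecond 1 0, h2nd0 0, h2nd0 1, h2nd1 0, h2nd1 1]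
    norm_num [Fin.ext_iff]
    exact (hgpos t).ne'
end

section
/- (A spray metrizable by a degenerate Finsler function.) On ℝ² × ℝ² consider the spray G¹ = y¹y², G² = −½(y²)² (the system ẍ¹ + 2ẋ¹ẋ² = 0, ẍ² − (ẋ²)² = 0), with N^j_i = ∂G^j/∂y^i. Then F(x,y) = e^{−x²} y² (where x² is the second base coordinate) is positively 1-homogeneous in y, positive on the region {y² > 0}, satisfies d_hF = 0 everywhere (∂F/∂x^i = Σ_j N^j_i ∂F/∂y^j for i = 1,2), and the vertical Hessian (½ ∂²F²/∂y^i∂y^j) has rank exactly 1 at every point; thus F is a degenerate Finsler function whose geodesic spray is the given spray. -/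
open Real Finset

/-! `F = e^{-x²} y²` is linear in the fibre, so the vertical Hessian of `½F²` reduces to
`∂_yF ⊗ ∂_yF`, a rank-one matrix since `∂_yF = e^{-x²} dy²` never vanishes. Along the
horizontal directions, `∂F/∂x² = -F` is matched by `N²₂ ∂F/∂y² = -y² e^{-x²}`, while every
other term of `d_hF` vanishes. -/

theorem Matrix.rank_vecMulVec_of_ne_zero {K m n : Type*} [Field K] [Fintype n]
    {w : m → K} {v : n → K} (hw : w ≠ 0) (hv : v ≠ 0) : (Matrix.vecMulVec w v).rank = 1 := by
  classical
  refine le_antisymm (Matrix.rank_vecMulVec_le w v) (Nat.one_le_iff_ne_zero.2 fun h => ?_)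
  obtain ⟨j, hj⟩ := Function.ne_iff.mp hv
  have hmem : v j • w ∈ LinearMap.range (Matrix.vecMulVec w v).mulVecLin :=
    ⟨Pi.single j 1, by ext i; simp [Matrix.vecMulVec_apply, mul_comm]⟩
  rw [Matrix.rank, Submodule.finrank_eq_zero] at h
  rw [h, Submodule.mem_bot] at hmem
  exact hw ((smul_eq_zero.1 hmem).resolve_left hj)

section

variable {n : ℕ}

theorem pdb_exp_neg_coord (k i : Fin n) (x : Fin n → ℝ) :
    pdb (fun x => rexp (-x k)) i x = -(rexp (-x k) * (Pi.single k 1 : Fin n → ℝ) i) := by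
  have h : HasFDerivAt (fun x : Fin n → ℝ => rexp (-x k))
      (rexp (-x k) • -ContinuousLinearMap.proj k) x :=
    (hasFDerivAt_apply k x).neg.exp
  rw [pdb, h.fderiv]
  simp [Pi.single_apply, eq_comm]

noncomputable def fundamentalTensor (F : ((Fin n → ℝ) × (Fin n → ℝ)) → ℝ)
    (p : (Fin n → ℝ) × (Fin n → ℝ)) : Matrix (Fin n) (Fin n) ℝ :=
  Matrix.of fun i j => (1 / 2) * pdy (pdy (fun q => F q ^ 2) j) i p

variable {a : (Fin n → ℝ) → ℝ} {p : (Fin n → ℝ) × (Fin n → ℝ)}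

theorem pdy_sq {F : ((Fin n → ℝ) × (Fin n → ℝ)) → ℝ} (hF : DifferentiableAt ℝ F p) (i : Fin n) :
    pdy (fun q => F q ^ 2) i p = 2 * F p * pdy F i p := by
  rw [pdy, fderiv_fun_pow 2 hF]
  simp [pdy]

theorem hasFDerivAt_mul_coord {a' : (Fin n → ℝ) →L[ℝ] ℝ} (ha : HasFDerivAt a a' p.1) (k : Fin n) :
    HasFDerivAt (fun q : (Fin n → ℝ) × (Fin n → ℝ) => a q.1 * q.2 k)
      (a p.1 • (ContinuousLinearMap.proj k).comp (ContinuousLinearMap.snd ℝ _ _)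
        + p.2 k • a'.comp (ContinuousLinearMap.fst ℝ _ _)) p :=
  (ha.comp p hasFDerivAt_fst).mul
    ((hasFDerivAt_apply (𝕜 := ℝ) k p.2).comp p (hasFDerivAt_snd (𝕜 := ℝ)))

theorem pdx_mul_coord (ha : DifferentiableAt ℝ a p.1) (k i : Fin n) :
    pdx (fun q => a q.1 * q.2 k) i p = pdb a i p.1 * p.2 k := by
  rw [pdx, (hasFDerivAt_mul_coord ha.hasFDerivAt k).fderiv, pdb]
  simp [mul_comm]

theorem pdy_mul_coord (ha : DifferentiableAt ℝ a p.1) (k i : Fin n) :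
    pdy (fun q => a q.1 * q.2 k) i p = a p.1 * (Pi.single k 1 : Fin n → ℝ) i := by
  rw [pdy, (hasFDerivAt_mul_coord ha.hasFDerivAt k).fderiv]
  simp [Pi.single_apply, eq_comm]

theorem fundamentalTensor_mul_coord (ha : Differentiable ℝ a) (k : Fin n) :
    fundamentalTensor (fun q => a q.1 * q.2 k) p
      = Matrix.vecMulVec (Pi.single k (a p.1) : Fin n → ℝ) (Pi.single k (a p.1)) := by
  ext i j
  have hsq : pdy (fun q => (a q.1 * q.2 k) ^ 2) j
      = fun q => (2 * (Pi.single k 1 : Fin n → ℝ) j * a q.1 ^ 2) * q.2 k := by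
    funext q
    rw [pdy_sq (by fun_prop), pdy_mul_coord (ha _)]
    ring
  have hb : Differentiable ℝ fun x => 2 * (Pi.single k 1 : Fin n → ℝ) j * a x ^ 2 := by fun_prop
  rw [fundamentalTensor, Matrix.of_apply, hsq, pdy_mul_coord (hb _), Matrix.vecMulVec_apply]
  simp only [Pi.single_apply]
  split_ifs <;> ring

theorem rank_fundamentalTensor_mul_coord (ha : Differentiable ℝ a) (k : Fin n)
    (hp : a p.1 ≠ 0) : (fundamentalTensor (fun q => a q.1 * q.2 k) p).rank = 1 := by
  have hv : (Pi.single k (a p.1) : Fin n → ℝ) ≠ 0 := by simpa using hp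
  rw [fundamentalTensor_mul_coord ha, Matrix.rank_vecMulVec_of_ne_zero hv hv]

end

theorem Ncon_eq_of_spray_eq {G : Fin 2 → ((Fin 2 → ℝ) × (Fin 2 → ℝ)) → ℝ}
    (hG : ∀ p, G 0 p = p.2 0 * p.2 1 ∧ G 1 p = -(1 / 2) * p.2 1 ^ 2)
    (j i : Fin 2) (p : (Fin 2 → ℝ) × (Fin 2 → ℝ)) :
    Ncon G j i p = !![p.2 1, p.2 0; 0, -p.2 1] j i := by
  have hG0 : G 0 = fun q => q.2 0 * q.2 1 := funext fun q => (hG q).1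
  have hG1 : G 1 = fun q => -(1 / 2) * q.2 1 ^ 2 := funext fun q => (hG q).2
  fin_cases j <;> fin_cases i <;>
    simp (disch := fun_prop) [Ncon, pdy, hG0, hG1, fderiv_fun_mul, fderiv_fun_pow,
      fderiv_apply, fderiv_snd, Pi.single_apply, inv_mul_cancel_left₀ (two_ne_zero' ℝ)]

/-- A spray metrizable by a degenerate Finsler function. For the
spray `G¹ = y¹y²`, `G² = -½(y²)²` on `ℝ² × ℝ²`, the function
`F(x,y) = e^{-x²} y²` is positively `1`-homogeneous in `y`, positive where
`y² > 0`, satisfies `d_hF = 0` everywhere, and its vertical Hessian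
`(½ ∂²F²/∂y^i∂y^j)` has rank exactly `1` at every point. -/
theorem degenerate_finsler_example
    (G : Fin 2 → ((Fin 2 → ℝ) × (Fin 2 → ℝ)) → ℝ)
    (hGdef : ∀ p, G 0 p = p.2 0 * p.2 1 ∧ G 1 p = -(1 / 2) * p.2 1 ^ 2)
    (F : ((Fin 2 → ℝ) × (Fin 2 → ℝ)) → ℝ)
    (hF : ∀ p, F p = Real.exp (-(p.1 1)) * p.2 1) :
    (∀ (x y : Fin 2 → ℝ) (l : ℝ), 0 < l → F (x, l • y) = l * F (x, y)) ∧
    (∀ p : (Fin 2 → ℝ) × (Fin 2 → ℝ), 0 < p.2 1 → 0 < F p) ∧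
    (∀ i, ∀ p : (Fin 2 → ℝ) × (Fin 2 → ℝ),
      pdx F i p = ∑ j, Ncon G j i p * pdy F j p) ∧
    (∀ p : (Fin 2 → ℝ) × (Fin 2 → ℝ),
      (Matrix.of fun i j => (1 / 2) * pdy (pdy (fun q => F q ^ 2) j) i p).rank = 1) := by
  obtain rfl : F = fun q => rexp (-q.1 1) * q.2 1 := funext hF
  have hexp : Differentiable ℝ fun x : Fin 2 → ℝ => rexp (-x 1) := by fun_prop
  refine ⟨fun x y l _ => ?_, fun p hp => mul_pos (exp_pos _) hp, fun i p => ?_,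
    fun p => rank_fundamentalTensor_mul_coord hexp 1 (exp_ne_zero _)⟩
  · simp only [Pi.smul_apply, smul_eq_mul]
    ring
  · rw [pdx_mul_coord (hexp _), pdb_exp_neg_coord, Fin.sum_univ_two, pdy_mul_coord (hexp _),
      pdy_mul_coord (hexp _), Ncon_eq_of_spray_eq hGdef, Ncon_eq_of_spray_eq hGdef]
    fin_cases i <;> simp [mul_comm]
end

section
/- (A non-metrizable isotropic spray.) On ℝ² × (ℝ²∖{0}) consider the spray G¹ = ½((y¹)² + (y²)²), G² = 2y¹y² (the system ẍ¹ + (ẋ¹)² + (ẋ²)² = 0, ẍ² + 4ẋ¹ẋ² = 0), with N^j_i = ∂G^j/∂y^i. Then there exists no smooth function F: ℝ² × (ℝ²∖{0}) → ℝ that is positive, positively 1-homogeneous in y, has everywhere invertible vertical Hessian (½ ∂²F²/∂y^i∂y^j), and satisfies d_hF = 0, i.e. ∂F/∂x^i = Σ_j N^j_i ∂F/∂y^j for i = 1,2. In other words, this spray is not Finsler metrizable. -/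
open Real Finset

open Topology Filter

set_option maxHeartbeats 1000000

section NM19aux

abbrev EE : Type := (Fin 2 → ℝ) × (Fin 2 → ℝ)

/-- base direction vector -/
def nmvx (i : Fin 2) : EE := (Pi.single i 1, 0)

/-- fibre direction vector -/
def nmvy (i : Fin 2) : EE := (0, Pi.single i 1)

/-- the continuous linear coordinate map `p ↦ p.2 i` -/
noncomputable def nmcy (i : Fin 2) : EE →L[ℝ] ℝ :=
  (ContinuousLinearMap.proj i).comp (ContinuousLinearMap.snd ℝ (Fin 2 → ℝ) (Fin 2 → ℝ))

@[simp] lemma nmcy_apply (i : Fin 2) (v : EE) : nmcy i v = v.2 i := rfl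

@[simp] lemma nmvx_snd (i j : Fin 2) : (nmvx i).2 j = 0 := rfl

@[simp] lemma nmvy_snd_same (i : Fin 2) : (nmvy i).2 i = 1 := by
  simp [nmvy]

@[simp] lemma nmvy_snd01 : (nmvy 0).2 1 = 0 := by
  show Pi.single (0 : Fin 2) (1:ℝ) 1 = 0
  simp [Pi.single_apply]

@[simp] lemma nmvy_snd10 : (nmvy 1).2 0 = 0 := by
  show Pi.single (1 : Fin 2) (1:ℝ) 0 = 0
  simp [Pi.single_apply]

end NM19aux

theorem non_metrizable_isotropic_spray
    (G : Fin 2 → ((Fin 2 → ℝ) × (Fin 2 → ℝ)) → ℝ)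
    (hGdef : ∀ p, G 0 p = (1 / 2) * (p.2 0 ^ 2 + p.2 1 ^ 2) ∧
      G 1 p = 2 * p.2 0 * p.2 1) :
    ¬ ∃ F : ((Fin 2 → ℝ) × (Fin 2 → ℝ)) → ℝ,
      ContDiffOn ℝ (⊤ : ℕ∞) F {p : (Fin 2 → ℝ) × (Fin 2 → ℝ) | p.2 ≠ 0} ∧
      (∀ p : (Fin 2 → ℝ) × (Fin 2 → ℝ), p.2 ≠ 0 → 0 < F p) ∧
      (∀ (x y : Fin 2 → ℝ), y ≠ 0 → ∀ l : ℝ, 0 < l → F (x, l • y) = l * F (x, y)) ∧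
      (∀ p : (Fin 2 → ℝ) × (Fin 2 → ℝ), p.2 ≠ 0 →
        (Matrix.of fun i j => (1 / 2) * pdy (pdy (fun q => F q ^ 2) j) i p).det ≠ 0) ∧
      (∀ i, ∀ p : (Fin 2 → ℝ) × (Fin 2 → ℝ), p.2 ≠ 0 →
        pdx F i p = ∑ j, Ncon G j i p * pdy F j p) := by
  rintro ⟨F, hF, hpos, hhom, -, hdh⟩
  -- the domain is open
  have hU : IsOpen {p : EE | p.2 ≠ 0} := by
    have h : {p : EE | p.2 ≠ 0} = Prod.snd ⁻¹' ({(0 : Fin 2 → ℝ)}ᶜ) := rfl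
    rw [h]
    exact isOpen_compl_singleton.preimage continuous_snd
  have hmem : ∀ {p : EE}, p.2 ≠ 0 → {q : EE | q.2 ≠ 0} ∈ 𝓝 p :=
    fun {p} hp => hU.mem_nhds hp
  -- first and second derivatives exist
  have hd1 : ∀ p : EE, p.2 ≠ 0 → HasFDerivAt F (fderiv ℝ F p) p := fun p hp =>
    ((hF.differentiableOn (by simp)).differentiableAt (hmem hp)).hasFDerivAt
  have hφc : ContDiffOn ℝ (⊤ : ℕ∞) (fderiv ℝ F) {p : EE | p.2 ≠ 0} :=
    hF.fderiv_of_isOpen hU (by simp)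
  have hd2 : ∀ p : EE, p.2 ≠ 0 → HasFDerivAt (fderiv ℝ F) (fderiv ℝ (fderiv ℝ F) p) p :=
    fun p hp => ((hφc.differentiableOn (by simp)).differentiableAt (hmem hp)).hasFDerivAt
  -- symmetry of second derivatives
  have hsym : ∀ p : EE, p.2 ≠ 0 → ∀ v w : EE,
      fderiv ℝ (fderiv ℝ F) p v w = fderiv ℝ (fderiv ℝ F) p w v := fun p hp v w =>
    second_derivative_symmetric_of_eventually
      (Filter.eventually_of_mem (hmem hp) fun q hq => hd1 q hq) (hd2 p hp) v w
  -- line machinery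
  have hline : ∀ p v : EE, HasDerivAt (fun t : ℝ => p + t • v) v 0 := by
    intro p v
    simpa using ((hasDerivAt_id (0 : ℝ)).smul_const v).const_add p
  have hpt : ∀ p v : EE, p + (0 : ℝ) • v = p := by intro p v; simp
  have hJ : ∀ p : EE, p.2 ≠ 0 → ∀ v w : EE,
      HasDerivAt (fun t : ℝ => fderiv ℝ F (p + t • v) w)
        (fderiv ℝ (fderiv ℝ F) p v w) 0 := by
    intro p hp v w
    have h1 : HasFDerivAt (fun r : EE => fderiv ℝ F r w)
        ((fderiv ℝ F p).comp (0 : EE →L[ℝ] EE)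
          + (fderiv ℝ (fderiv ℝ F) p).flip w) p :=
      (hd2 p hp).clm_apply (hasFDerivAt_const w p)
    have h2 := h1.comp_hasDerivAt_of_eq (x := 0) (hline p v) (hpt p v).symm
    simpa [Function.comp_def] using h2
  have hcoord : ∀ (p v : EE) (i : Fin 2),
      HasDerivAt (fun t : ℝ => (p + t • v).2 i) (v.2 i) 0 := by
    intro p v i
    have h : (fun t : ℝ => (p + t • v).2 i) = fun t : ℝ => p.2 i + t * v.2 i := by
      funext t
      simp [Prod.snd_add]
    rw [h]
    simpa using ((hasDerivAt_id (0 : ℝ)).mul_const (v.2 i)).const_add (p.2 i)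
  have hFl : ∀ p : EE, p.2 ≠ 0 → ∀ v : EE,
      HasDerivAt (fun t : ℝ => F (p + t • v)) (fderiv ℝ F p v) 0 := by
    intro p hp v
    simpa [Function.comp_def] using (hd1 p hp).comp_hasDerivAt_of_eq (x := 0) (hline p v) (hpt p v).symm
  have hEv : ∀ (p v : EE), p.2 ≠ 0 → ∀ᶠ t in 𝓝 (0 : ℝ), (p + t • v).2 ≠ 0 := by
    intro p v hp
    have hc : Continuous fun t : ℝ => p + t • v := continuous_const.add (continuous_id.smul continuous_const)
    have h0 : (0 : ℝ) ∈ (fun t : ℝ => p + t • v) ⁻¹' {q : EE | q.2 ≠ 0} := by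
      simp [hp]
    exact Filter.eventually_of_mem ((hU.preimage hc).mem_nhds h0) fun t ht => ht
  -- values of the nonlinear connection
  have hN : ∀ p : EE, Ncon G 0 0 p = p.2 0 ∧ Ncon G 0 1 p = p.2 1 ∧
      Ncon G 1 0 p = 2 * p.2 1 ∧ Ncon G 1 1 p = 2 * p.2 0 := by
    intro p
    have hG0 : G 0 = fun q : EE => (1 : ℝ) / 2 * (q.2 0 * q.2 0 + q.2 1 * q.2 1) :=
      funext fun q => by rw [(hGdef q).1]; ring
    have hG1 : G 1 = fun q : EE => (2 * q.2 0) * q.2 1 :=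
      funext fun q => (hGdef q).2
    have hc0 : HasFDerivAt (fun q : EE => q.2 0) (nmcy 0) p := (nmcy 0).hasFDerivAt
    have hc1 : HasFDerivAt (fun q : EE => q.2 1) (nmcy 1) p := (nmcy 1).hasFDerivAt
    have hf0 := (((hc0.mul hc0).add (hc1.mul hc1)).const_mul ((1 : ℝ) / 2)).fderiv
    have hf1 := ((hc0.const_mul (2 : ℝ)).mul hc1).fderiv
    refine ⟨?_, ?_, ?_, ?_⟩
    · simp only [Ncon, pdy]
      rw [hG0]; erw [hf0]
      simp [Pi.single_apply]
      try ring
    · simp only [Ncon, pdy]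
      rw [hG0]; erw [hf0]
      simp [Pi.single_apply]
      try ring
    · simp only [Ncon, pdy]
      rw [hG1]; erw [hf1]
      simp [Pi.single_apply]
      try ring
    · simp only [Ncon, pdy]
      rw [hG1]; erw [hf1]
      simp [Pi.single_apply]
      try ring
  -- the two horizontal equations
  have ha0 : ∀ q : EE, q.2 ≠ 0 → fderiv ℝ F q (nmvx 0) =
      q.2 0 * fderiv ℝ F q (nmvy 0) + 2 * q.2 1 * fderiv ℝ F q (nmvy 1) := by
    intro q hq
    have h := hdh 0 q hq
    rw [Fin.sum_univ_two, (hN q).1, (hN q).2.2.1] at h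
    simpa only [pdx, pdy, nmvx, nmvy] using h
  have ha1 : ∀ q : EE, q.2 ≠ 0 → fderiv ℝ F q (nmvx 1) =
      q.2 1 * fderiv ℝ F q (nmvy 0) + 2 * q.2 0 * fderiv ℝ F q (nmvy 1) := by
    intro q hq
    have h := hdh 1 q hq
    rw [Fin.sum_univ_two, (hN q).2.1, (hN q).2.2.2] at h
    simpa only [pdx, pdy, nmvx, nmvy] using h
  -- differentiating the horizontal equations
  have hda : ∀ p : EE, p.2 ≠ 0 → ∀ (w : EE) (a b : Fin 2),
      (∀ q : EE, q.2 ≠ 0 → fderiv ℝ F q w =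
        q.2 a * fderiv ℝ F q (nmvy 0) + 2 * q.2 b * fderiv ℝ F q (nmvy 1)) →
      ∀ v : EE, fderiv ℝ (fderiv ℝ F) p v w =
        v.2 a * fderiv ℝ F p (nmvy 0) + p.2 a * fderiv ℝ (fderiv ℝ F) p v (nmvy 0) +
        2 * (v.2 b * fderiv ℝ F p (nmvy 1) + p.2 b * fderiv ℝ (fderiv ℝ F) p v (nmvy 1)) := by
    intro p hp w a b hid v
    have hL := hJ p hp v w
    have hR := ((hcoord p v a).mul (hJ p hp v (nmvy 0))).add
      (((hcoord p v b).const_mul (2 : ℝ)).mul (hJ p hp v (nmvy 1)))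
    have hee : (fun t : ℝ => fderiv ℝ F (p + t • v) w) =ᶠ[𝓝 (0 : ℝ)]
        (fun t : ℝ => (p + t • v).2 a * fderiv ℝ F (p + t • v) (nmvy 0) +
          2 * (p + t • v).2 b * fderiv ℝ F (p + t • v) (nmvy 1)) :=
      (hEv p v hp).mono fun t ht => hid _ ht
    have key := hL.unique (hR.congr_of_eventuallyEq hee)
    simp only [hpt] at key
    linear_combination key
  -- the curvature condition
  have hC : ∀ p : EE, p.2 ≠ 0 →
      p.2 1 * fderiv ℝ F p (nmvy 0) = 2 * p.2 0 * fderiv ℝ F p (nmvy 1) := by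
    intro p hp
    have e1 := hda p hp (nmvx 0) 0 1 ha0 (nmvx 1)
    have e2 := hda p hp (nmvx 1) 1 0 ha1 (nmvx 0)
    have e3 := hda p hp (nmvx 0) 0 1 ha0 (nmvy 0)
    have e4 := hda p hp (nmvx 0) 0 1 ha0 (nmvy 1)
    have e5 := hda p hp (nmvx 1) 1 0 ha1 (nmvy 0)
    have e6 := hda p hp (nmvx 1) 1 0 ha1 (nmvy 1)
    rw [hsym p hp (nmvx 1) (nmvx 0)] at e1
    rw [hsym p hp (nmvy 0) (nmvx 0)] at e3
    rw [hsym p hp (nmvy 1) (nmvx 0)] at e4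
    rw [hsym p hp (nmvy 0) (nmvx 1)] at e5
    rw [hsym p hp (nmvy 1) (nmvx 1)] at e6
    rw [hsym p hp (nmvy 1) (nmvy 0)] at e4 e6
    simp only [nmvx_snd, nmvy_snd_same, nmvy_snd01, nmvy_snd10, zero_mul, one_mul,
      mul_zero, add_zero, zero_add, mul_one] at e1 e2 e3 e4 e5 e6
    linear_combination e2 - e1 - p.2 0 * e5 - 2 * p.2 1 * e6 + p.2 1 * e3 + 2 * p.2 0 * e4
  -- Euler's relation
  have hEuler : ∀ p : EE, p.2 ≠ 0 →
      p.2 0 * fderiv ℝ F p (nmvy 0) + p.2 1 * fderiv ℝ F p (nmvy 1) = F p := by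
    intro p hp
    have hcur : HasDerivAt (fun l : ℝ => ((p.1, l • p.2) : EE)) ((0, p.2) : EE) 1 :=
      (hasDerivAt_const _ _).prodMk (by simpa using (hasDerivAt_id (1 : ℝ)).smul_const p.2)
    have hc : HasDerivAt (fun l : ℝ => F (p.1, l • p.2)) (fderiv ℝ F p ((0, p.2) : EE)) 1 := by
      simpa [Function.comp_def] using (hd1 p hp).comp_hasDerivAt_of_eq (x := 1) hcur (by simp)
    have h2 : HasDerivAt (fun l : ℝ => l * F p) (F p) 1 := by
      simpa using (hasDerivAt_id (1 : ℝ)).mul_const (F p)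
    have hee : (fun l : ℝ => F (p.1, l • p.2)) =ᶠ[𝓝 (1 : ℝ)] fun l => l * F p :=
      Filter.eventually_of_mem (isOpen_Ioi.mem_nhds (by norm_num : (1 : ℝ) ∈ Set.Ioi 0))
        fun l hl => by simpa using hhom p.1 p.2 hp l hl
    have hkey : fderiv ℝ F p ((0, p.2) : EE) = F p :=
      hc.unique (h2.congr_of_eventuallyEq hee)
    have hdec : ((0, p.2) : EE) = p.2 0 • nmvy 0 + p.2 1 • nmvy 1 := by
      refine Prod.ext (by simp [nmvy]) ?_
      funext i
      fin_cases i <;> simp [nmvy, Pi.single_apply]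
    rw [hdec, map_add, map_smul, map_smul, smul_eq_mul, smul_eq_mul] at hkey
    exact hkey
  -- solved fibre derivative
  have hPhi : ∀ q : EE, q.2 ≠ 0 →
      (2 * q.2 0 ^ 2 + q.2 1 ^ 2) * fderiv ℝ F q (nmvy 0) = 2 * q.2 0 * F q := by
    intro q hq
    linear_combination q.2 1 * hC q hq + 2 * q.2 0 * hEuler q hq
  -- work at the point p₀ = (0, (1,1))
  set p₀ : EE := ((fun _ => 0), (fun _ => 1)) with hp₀def
  have hp₀ : p₀.2 ≠ 0 := by
    intro h
    have h0 := congrFun h 0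
    norm_num at h0
  have hy₀ : ∀ i : Fin 2, p₀.2 i = 1 := fun _ => rfl
  -- differentiate the solved identity at p₀
  have hdPhi : ∀ v : EE,
      (2 * (2 * p₀.2 0 ^ 1 * v.2 0) + 2 * p₀.2 1 ^ 1 * v.2 1) * fderiv ℝ F p₀ (nmvy 0)
        + (2 * p₀.2 0 ^ 2 + p₀.2 1 ^ 2) * fderiv ℝ (fderiv ℝ F) p₀ v (nmvy 0)
      = 2 * v.2 0 * F p₀ + 2 * p₀.2 0 * fderiv ℝ F p₀ v := by
    intro v
    have hL := ((((hcoord p₀ v 0).fun_pow 2).const_mul (2 : ℝ)).add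
      ((hcoord p₀ v 1).fun_pow 2)).mul (hJ p₀ hp₀ v (nmvy 0))
    have hR := (((hcoord p₀ v 0).const_mul (2 : ℝ))).mul (hFl p₀ hp₀ v)
    have hee : (fun t : ℝ => (2 * (p₀ + t • v).2 0 ^ 2 + (p₀ + t • v).2 1 ^ 2) *
          fderiv ℝ F (p₀ + t • v) (nmvy 0)) =ᶠ[𝓝 (0 : ℝ)]
        (fun t : ℝ => 2 * (p₀ + t • v).2 0 * F (p₀ + t • v)) :=
      (hEv p₀ v hp₀).mono fun t ht => hPhi _ ht
    have key := hL.unique (hR.congr_of_eventuallyEq hee)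
    simp only [hpt, Pi.add_apply] at key
    linear_combination key
  -- assemble the contradiction
  have d1 := hdPhi (nmvy 0)
  have d2 := hdPhi (nmvy 1)
  have d3 := hdPhi (nmvx 0)
  have e3 := hda p₀ hp₀ (nmvx 0) 0 1 ha0 (nmvy 0)
  have hFx := ha0 p₀ hp₀
  have hs := hsym p₀ hp₀ (nmvx 0) (nmvy 0)
  have hs7 := hsym p₀ hp₀ (nmvy 0) (nmvy 1)
  have hE := hEuler p₀ hp₀
  have hCp := hC p₀ hp₀
  rw [hsym p₀ hp₀ (nmvy 0) (nmvx 0)] at e3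
  rw [hsym p₀ hp₀ (nmvy 0) (nmvy 1)] at e3
  simp only [nmvx_snd, nmvy_snd_same, nmvy_snd01, nmvy_snd10, hy₀, one_pow, mul_one,
    one_mul, zero_mul, mul_zero, add_zero, zero_add] at d1 d2 d3 e3 hFx hE hCp hs7
  rw [hs] at d3
  have hF0 : F p₀ = 0 := by linarith [hs7, d1, d2, d3, e3, hFx, hE, hCp]
  exact absurd hF0 (hpos p₀ hp₀).ne'
end
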